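/- arXiv:2108.03153 — 4 statements merged into one kernel-verified Lean document; each statement's English description precedes it below -/
import Mathlib

section
/- Let A be a Noether R-algebra and let a ⊆ R be an ideal such that R/a is an artinian ring. For every a-adically complete flat right A-module F, the canonical map F → F ⊗_R (R/a) is a flat cover in the category of right A-modules. -/
/-!
Common definitions: module-theoretic notions over a (possibly noncommutative) ring,
notions relative to a central base ring, and Hom-module structures.
Right `A`-modules are treated as left `Aᵐᵒᵖ`-modules.
-/

universe u

open MulOpposite

section AnyRing

variable {S : Type u} [Ring S]

/-- Flatness of a left `S`-module, via the standard equational criterion. -/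
def ModFlat (S : Type u) [Ring S] (M : Type u) [AddCommGroup M] [Module S M] : Prop :=
  ∀ (n : ℕ) (a : Fin n → S) (x : Fin n → M), ∑ i, a i • x i = 0 →
    ∃ (m : ℕ) (b : Fin n → Fin m → S) (y : Fin m → M),
      (∀ i, x i = ∑ j, b i j • y j) ∧ ∀ j, ∑ i, a i * b i j = 0

/-- `M` is cotorsion: every extension of a flat module by `M` splits
(equivalently, `Ext¹(F, M) = 0` for all flat `F`). -/
def ModCotorsion (S : Type u) [Ring S] (M : Type u) [AddCommGroup M] [Module S M] : Prop :=
  ∀ (X : Type u) [AddCommGroup X] [Module S X], ∀ i : M →ₗ[S] X,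
    Function.Injective i → ModFlat S (X ⧸ LinearMap.range i) →
      ∃ r : X →ₗ[S] M, r ∘ₗ i = LinearMap.id

/-- `M` is flat cotorsion. -/
def ModFlatCotorsion (S : Type u) [Ring S] (M : Type u) [AddCommGroup M] [Module S M] : Prop :=
  ModFlat S M ∧ ModCotorsion S M

/-- `f : F → M` is a flat cover: `F` is flat, every map from a flat module to `M`
factors through `f`, and `f` is right minimal. -/
def IsFlatCover {F M : Type u} [AddCommGroup F] [Module S F] [AddCommGroup M] [Module S M]
    (f : F →ₗ[S] M) : Prop :=
  ModFlat S F ∧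
    (∀ (G : Type u) [AddCommGroup G] [Module S G], ModFlat S G →
      ∀ g : G →ₗ[S] M, ∃ h : G →ₗ[S] F, f ∘ₗ h = g) ∧
    ∀ g : F →ₗ[S] F, f ∘ₗ g = f → Function.Bijective g

/-- `f : M → I` is an injective envelope: an essential monomorphism into an
injective module. -/
def IsInjEnvelope {M I : Type u} [AddCommGroup M] [Module S M] [AddCommGroup I] [Module S I]
    (f : M →ₗ[S] I) : Prop :=
  Function.Injective f ∧ Module.Injective S I ∧
    ∀ K : Submodule S I, K ⊓ LinearMap.range f = ⊥ → K = ⊥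

/-- `f` is a pure monomorphism: injective, and every finite system of linear
equations with constants in `M` solvable in `N` is solvable in `M`. -/
def IsPureMono {M N : Type u} [AddCommGroup M] [Module S M] [AddCommGroup N] [Module S N]
    (f : M →ₗ[S] N) : Prop :=
  Function.Injective f ∧
    ∀ (k n : ℕ) (a : Fin k → Fin n → S) (c : Fin n → M),
      (∃ x : Fin k → N, ∀ j, f (c j) = ∑ i, a i j • x i) →
        ∃ y : Fin k → M, ∀ j, c j = ∑ i, a i j • y i

/-- `M` is pure-injective. -/
def ModPureInjective (S : Type u) [Ring S] (M : Type u) [AddCommGroup M] [Module S M] : Prop :=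
  ∀ (X Y : Type u) [AddCommGroup X] [Module S X] [AddCommGroup Y] [Module S Y],
    ∀ f : X →ₗ[S] Y, IsPureMono f → ∀ g : X →ₗ[S] M, ∃ h : Y →ₗ[S] M, h ∘ₗ f = g

/-- `f : M → H` is a pure-injective envelope: a left minimal pure monomorphism into a
pure-injective module. -/
def IsPureInjEnvelope {M H : Type u} [AddCommGroup M] [Module S M] [AddCommGroup H] [Module S H]
    (f : M →ₗ[S] H) : Prop :=
  IsPureMono f ∧ ModPureInjective S H ∧ ∀ g : H →ₗ[S] H, g ∘ₗ f = f → Function.Bijective g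

/-- `f : M → C` is a cotorsion envelope: a left minimal monomorphism into a cotorsion
module through which every map from `M` to a cotorsion module factors. -/
def IsCotorsionEnvelope {M C : Type u} [AddCommGroup M] [Module S M] [AddCommGroup C] [Module S C]
    (f : M →ₗ[S] C) : Prop :=
  Function.Injective f ∧ ModCotorsion S C ∧
    (∀ (C' : Type u) [AddCommGroup C'] [Module S C'], ModCotorsion S C' →
      ∀ g : M →ₗ[S] C', ∃ h : C →ₗ[S] C', h ∘ₗ f = g) ∧
    ∀ g : C →ₗ[S] C, g ∘ₗ f = f → Function.Bijective g

/-- An indecomposable module: nontrivial, and with no nontrivial direct sum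
decomposition. -/
def ModIndecomposable (S : Type u) [Ring S] (M : Type u) [AddCommGroup M] [Module S M] : Prop :=
  Nontrivial M ∧ ∀ N N' : Submodule S M, IsCompl N N' → N = ⊥ ∨ N' = ⊥

/-- A prime two-sided ideal of a possibly noncommutative ring, encoded as a left ideal
that is closed under right multiplication and satisfies `aSb ⊆ P → a ∈ P ∨ b ∈ P`. -/
def IsPrimeTwoSided (P : Ideal S) : Prop :=
  P ≠ ⊤ ∧ (∀ a ∈ P, ∀ b : S, a * b ∈ P) ∧
    ∀ a b : S, (∀ x : S, a * x * b ∈ P) → a ∈ P ∨ b ∈ P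

/-- A maximal two-sided ideal: a proper two-sided ideal that is maximal among proper
two-sided ideals. -/
def IsMaximalTwoSided (P : Ideal S) : Prop :=
  (∀ a ∈ P, ∀ b : S, a * b ∈ P) ∧ P ≠ ⊤ ∧
    ∀ Q : Ideal S, (∀ a ∈ Q, ∀ b : S, a * b ∈ Q) → P < Q → Q = ⊤

/-- The submodule `M·J` of a right `S`-module generated by the products `x • a`, `a ∈ J`. -/
def setSMulSub (J : Set S) (M : Type u) [AddCommGroup M] [Module Sᵐᵒᵖ M] : Submodule Sᵐᵒᵖ M :=
  Submodule.span Sᵐᵒᵖ {y | ∃ (x : M) (a : S), a ∈ J ∧ y = op a • x}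

/-- The submodule of a right `S`-module annihilated by a set `J` closed under left
multiplication (e.g. a left or two-sided ideal); this realizes `Hom_S(S/J, M)`. -/
def setAnnSub (J : Set S) (hJ : ∀ c : S, ∀ a ∈ J, c * a ∈ J)
    (M : Type u) [AddCommGroup M] [Module Sᵐᵒᵖ M] : Submodule Sᵐᵒᵖ M where
  carrier := {x | ∀ a ∈ J, op a • x = 0}
  add_mem' := fun {x y} hx hy a ha => by rw [smul_add, hx a ha, hy a ha, add_zero]
  zero_mem' := fun a _ => smul_zero _
  smul_mem' := fun c x hx a ha => by
    have h1 : (op a : Sᵐᵒᵖ) • c • x = op (c.unop * a) • x := by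
      rw [smul_smul]; rfl
    rw [h1, hx _ (hJ c.unop a ha)]

/-- The Jacobson radical of a ring, as a set: the intersection of all maximal left
ideals (which coincides with the two-sided Jacobson radical). -/
def jacobsonSet (T : Type u) [Ring T] : Set T :=
  {a : T | ∀ J : Ideal T, J.IsMaximal → a ∈ J}

/-- The contraction `ρ⁻¹(rad T)` of the Jacobson radical along a ring homomorphism. -/
def radContraction {S T : Type u} [Ring S] [Ring T] (ρ : S →+* T) : Set S :=
  ρ ⁻¹' jacobsonSet T

theorem radContraction_mul_mem {S T : Type u} [Ring S] [Ring T] (ρ : S →+* T)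
    (c : S) (a : S) (ha : a ∈ radContraction ρ) : c * a ∈ radContraction ρ := by
  intro J hJ
  rw [map_mul]
  exact J.mul_mem_left _ (ha J hJ)

end AnyRing

section Base

variable {R : Type u} [CommRing R]

/-- `M` is `p`-local: every `s ∉ p` acts bijectively on `M`
(equivalently, `M → M_p` is an isomorphism). -/
def PLocal (p : Ideal R) (M : Type u) [AddCommGroup M] [Module R M] : Prop :=
  ∀ s ∉ p, Function.Bijective fun x : M => s • x

/-- `M` is `a`-torsion. -/
def PTorsion (a : Ideal R) (M : Type u) [AddCommGroup M] [Module R M] : Prop :=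
  ∀ x : M, ∃ n : ℕ, ∀ r ∈ a ^ n, r • x = 0

/-- `f : M → N` exhibits `N` as the localization of `M` at the prime `p`. -/
def IsLocalizationHom (p : Ideal R) {M N : Type u} [AddCommGroup M] [Module R M]
    [AddCommGroup N] [Module R N] (f : M →ₗ[R] N) : Prop :=
  (∀ s ∉ p, Function.Bijective fun y : N => s • y) ∧
    (∀ y : N, ∃ (x : M) (s : R), s ∉ p ∧ s • y = f x) ∧
    ∀ x : M, f x = 0 → ∃ s ∉ p, s • x = 0

/-- The map induced by `f` on quotients modulo `a ^ n`. -/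
noncomputable def quotPowMap (a : Ideal R) (n : ℕ) {M N : Type u} [AddCommGroup M] [Module R M]
    [AddCommGroup N] [Module R N] (f : M →ₗ[R] N) :
    (M ⧸ (a ^ n • ⊤ : Submodule R M)) →ₗ[R] N ⧸ (a ^ n • ⊤ : Submodule R N) :=
  Submodule.mapQ _ _ f <| by
    rw [← Submodule.map_le_iff_le_comap, Submodule.map_smul'']
    exact Submodule.smul_mono le_rfl le_top

/-- `f : M → N` exhibits `N` as the `a`-adic completion of `M`:
`N` is `a`-adically complete and `f` induces isomorphisms modulo all powers of `a`. -/
def IsAdicCompletionHom (a : Ideal R) {M N : Type u} [AddCommGroup M] [Module R M]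
    [AddCommGroup N] [Module R N] (f : M →ₗ[R] N) : Prop :=
  IsAdicComplete a N ∧ ∀ n : ℕ, Function.Bijective (quotPowMap a n f)

/-- A simple `p`-localized module: a right module over `T` (with central `R`-action) that
is `p`-local, annihilated by `P`, and simple over the localization `T_p` (expressed via
submodules closed under division by elements outside `p`). -/
def LocSimple {T : Type u} [Ring T] [Algebra R T] (p : Ideal R) (P : Set T)
    (S : Type u) [AddCommGroup S] [Module R S] [Module T S] [IsScalarTower R T S] : Prop :=
  Nontrivial S ∧ PLocal p S ∧ (∀ a ∈ P, ∀ x : S, a • x = 0) ∧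
    ∀ N : Submodule T S, (∀ s ∉ p, ∀ x : S, s • x ∈ N → x ∈ N) → N = ⊥ ∨ N = ⊤

/-- `M` is, in a `p`-local sense, a semisimple module over the localization at `p`:
it is `p`-local and the lattice of localized submodules is complemented. -/
def SemisimpleLoc {T : Type u} [Ring T] [Algebra R T] (p : Ideal R)
    (M : Type u) [AddCommGroup M] [Module R M] [Module T M] [IsScalarTower R T M] : Prop :=
  PLocal p M ∧
    ∀ N : Submodule T M, (∀ s ∉ p, ∀ x : M, s • x ∈ N → x ∈ N) →
      ∃ N' : Submodule T M, (∀ s ∉ p, ∀ x : M, s • x ∈ N' → x ∈ N') ∧ IsCompl N N'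

end Base

section SmulTop

variable {R A : Type u} [CommRing R] [Ring A] [Algebra R A]

/-- The image `a • M` of an ideal of `R` in a right `A`-module, as an `Aᵐᵒᵖ`-submodule. -/
def idealSMulSub (a : Ideal R) (M : Type u) [AddCommGroup M] [Module R M] [Module Aᵐᵒᵖ M]
    [IsScalarTower R Aᵐᵒᵖ M] : Submodule Aᵐᵒᵖ M where
  carrier := (a • (⊤ : Submodule R M) : Submodule R M)
  add_mem' := fun hx hy => Submodule.add_mem _ hx hy
  zero_mem' := Submodule.zero_mem _
  smul_mem' := fun c x hx => by
    refine Submodule.smul_induction_on hx (fun r hr y _ => ?_) (fun u v hu hv => ?_)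
    · rw [smul_comm]
      exact Submodule.smul_mem_smul hr Submodule.mem_top
    · rw [smul_add]
      exact Submodule.add_mem _ hu hv

end SmulTop

section HomModules

variable {S₀ T : Type u} [CommRing S₀] [Ring T]
variable {M E : Type u} [AddCommGroup M] [Module S₀ M] [AddCommGroup E] [Module S₀ E]

/-- If `M` is a left `T`-module then `Hom_{S₀}(M, E)` is a right `T`-module. -/
instance homRightSMul [Module T M] [SMulCommClass T S₀ M] : SMul Tᵐᵒᵖ (M →ₗ[S₀] E) :=
  ⟨fun a f => f ∘ₗ DistribMulAction.toLinearMap S₀ M a.unop⟩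

theorem homRight_smul_apply [Module T M] [SMulCommClass T S₀ M] (a : Tᵐᵒᵖ)
    (f : M →ₗ[S₀] E) (x : M) : (a • f) x = f (a.unop • x) := rfl

instance homRightModule [Module T M] [SMulCommClass T S₀ M] : Module Tᵐᵒᵖ (M →ₗ[S₀] E) where
  one_smul f := LinearMap.ext fun x => by rw [homRight_smul_apply, unop_one, one_smul]
  mul_smul a b f := LinearMap.ext fun x => by
    rw [homRight_smul_apply, homRight_smul_apply, homRight_smul_apply, unop_mul, mul_smul]
  smul_zero a := LinearMap.ext fun x => rfl
  smul_add a f g := LinearMap.ext fun x => rfl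
  add_smul a b f := LinearMap.ext fun x => by
    rw [homRight_smul_apply, unop_add, add_smul, map_add]; rfl
  zero_smul f := LinearMap.ext fun x => by
    rw [homRight_smul_apply, unop_zero, zero_smul, map_zero]; rfl

instance homRightTower [Module T M] [SMulCommClass T S₀ M] [Algebra S₀ T]
    [IsScalarTower S₀ T M] : IsScalarTower S₀ Tᵐᵒᵖ (M →ₗ[S₀] E) := by
  constructor
  intro r a f
  refine LinearMap.ext fun x => ?_
  rw [LinearMap.smul_apply, homRight_smul_apply, homRight_smul_apply, unop_smul,
    smul_assoc, map_smul]

/-- If `M` is a right `T`-module then `Hom_{S₀}(M, E)` is a left `T`-module. -/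
instance homLeftSMul [Module Tᵐᵒᵖ M] [SMulCommClass Tᵐᵒᵖ S₀ M] : SMul T (M →ₗ[S₀] E) :=
  ⟨fun a f => f ∘ₗ DistribMulAction.toLinearMap S₀ M (op a)⟩

theorem homLeft_smul_apply [Module Tᵐᵒᵖ M] [SMulCommClass Tᵐᵒᵖ S₀ M] (a : T)
    (f : M →ₗ[S₀] E) (x : M) : (a • f) x = f (op a • x) := rfl

instance homLeftModule [Module Tᵐᵒᵖ M] [SMulCommClass Tᵐᵒᵖ S₀ M] : Module T (M →ₗ[S₀] E) where
  one_smul f := LinearMap.ext fun x => by rw [homLeft_smul_apply, op_one, one_smul]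
  mul_smul a b f := LinearMap.ext fun x => by
    rw [homLeft_smul_apply, homLeft_smul_apply, homLeft_smul_apply, op_mul, mul_smul]
  smul_zero a := LinearMap.ext fun x => rfl
  smul_add a f g := LinearMap.ext fun x => rfl
  add_smul a b f := LinearMap.ext fun x => by
    rw [homLeft_smul_apply, op_add, add_smul, map_add]; rfl
  zero_smul f := LinearMap.ext fun x => by
    rw [homLeft_smul_apply, op_zero, zero_smul, map_zero]; rfl

instance homLeftTower [Module Tᵐᵒᵖ M] [SMulCommClass Tᵐᵒᵖ S₀ M] [Algebra S₀ T]
    [IsScalarTower S₀ Tᵐᵒᵖ M] : IsScalarTower S₀ T (M →ₗ[S₀] E) := by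
  constructor
  intro r a f
  refine LinearMap.ext fun x => ?_
  rw [LinearMap.smul_apply, homLeft_smul_apply, homLeft_smul_apply, op_smul,
    smul_assoc, map_smul]

end HomModules

section Bundled

/-- A bundled right `A`-module with compatible central `R`-action. -/
structure RightModule (R A : Type u) [CommRing R] [Ring A] [Algebra R A] :
    Type (u + 1) where
  carrier : Type u
  [addCommGroup : AddCommGroup carrier]
  [modA : Module Aᵐᵒᵖ carrier]
  [modR : Module R carrier]
  [tower : IsScalarTower R Aᵐᵒᵖ carrier]

attribute [instance] RightModule.addCommGroup RightModule.modA RightModule.modR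
  RightModule.tower

instance (R A : Type u) [CommRing R] [Ring A] [Algebra R A] :
    CoeSort (RightModule R A) (Type u) :=
  ⟨RightModule.carrier⟩

/-- A bundled left `A`-module with compatible central `R`-action. -/
structure LeftModule (R A : Type u) [CommRing R] [Ring A] [Algebra R A] :
    Type (u + 1) where
  carrier : Type u
  [addCommGroup : AddCommGroup carrier]
  [modA : Module A carrier]
  [modR : Module R carrier]
  [tower : IsScalarTower R A carrier]

attribute [instance] LeftModule.addCommGroup LeftModule.modA LeftModule.modR
  LeftModule.tower

instance (R A : Type u) [CommRing R] [Ring A] [Algebra R A] :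
    CoeSort (LeftModule R A) (Type u) :=
  ⟨LeftModule.carrier⟩

end Bundled

/-!
Let `𝔞 = aA` and let `J ⊇ 𝔞` be its Jacobson radical. As `A/𝔞` is finite over the artinian
ring `R/a`, it is artinian, hence semiprimary: `A/J` is semisimple and `Jᴺ ⊆ 𝔞` for some `N`.

Right minimality: if `g` induces the identity on `F/aF`, then `g - 1` maps `aᵏF` into `aᵏ⁺¹F`,
so `g` is injective because `F` is separated, and surjective because `F` is complete.

Lifting: the filtration `Dₙ = aF·Jⁿ` is cofinal with the `a`-adic one (`aⁿ⁺¹F ⊆ Dₙ` and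
`D_{Nk} ⊆ aᵏF`), so a compatible family of maps `G → F/Dₙ` comes from a map `G → F`. The family
is built one step at a time: the kernel of `F/Dₙ₊₁ → F/Dₙ` is killed by `J`, and the pullback
`P → G` of such an extension to a flat `G` splits, because by purity its kernel meets `P·J`
trivially and therefore maps isomorphically onto a summand of the semisimple module `P/P·J`.
-/

open Submodule

section FlatLifting

variable {S : Type u} [Ring S]

theorem Submodule.exists_isCompl_of_disjoint {P : Type*} [AddCommGroup P] [Module S P]
    {K L : Submodule S P} [IsSemisimpleModule S (P ⧸ L)] (h : Disjoint K L) :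
    ∃ K' : Submodule S P, IsCompl K K' := by
  obtain ⟨C, hC⟩ := ComplementedLattice.exists_isCompl (K.map L.mkQ)
  refine ⟨C.comap L.mkQ, disjoint_def.2 fun x hxK hxC => ?_,
    codisjoint_iff.2 <| eq_top_iff.2 fun x _ => ?_⟩
  · have hx : L.mkQ x = 0 := disjoint_def.1 hC.disjoint _ (mem_map_of_mem hxK) hxC
    exact disjoint_def.1 h x hxK ((Quotient.mk_eq_zero L).1 hx)
  · obtain ⟨_, ⟨k, hk, rfl⟩, c, hc, hkc⟩ :=
      mem_sup.1 (hC.sup_eq_top ▸ mem_top : L.mkQ x ∈ K.map L.mkQ ⊔ C)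
    refine mem_sup.2 ⟨k, hk, x - k, ?_, add_sub_cancel _ _⟩
    rwa [mem_comap, map_sub, ← hkc, add_sub_cancel_left]

theorem Submodule.exists_sum_eq_of_mem_smul_top {M : Type*} [AddCommGroup M] [Module S M]
    {J : Ideal S} {x : M} (hx : x ∈ J • (⊤ : Submodule S M)) :
    ∃ (n : ℕ) (j : Fin n → S) (m : Fin n → M), (∀ i, j i ∈ J) ∧ x = ∑ i, j i • m i := by
  let gens : Set M := {y | ∃ j ∈ J, ∃ m, y = j • m}
  have hspan : x ∈ span S gens :=
    smul_le.2 (fun j hj m _ => subset_span (show j • m ∈ gens from ⟨j, hj, m, rfl⟩)) hx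
  obtain ⟨n, f, g, rfl⟩ := mem_span_set'.1 hspan
  choose j hj m hm using fun i => (g i).2
  exact ⟨n, fun i => f i * j i, m, fun i => J.mul_mem_left _ (hj i),
    Finset.sum_congr rfl fun i _ => by rw [hm i, mul_smul]⟩

theorem Module.IsTorsionBySet.isSemisimpleModule {M : Type*} [AddCommGroup M] [Module S M]
    {J : Ideal S} [J.IsTwoSided] [IsSemisimpleRing (S ⧸ J)]
    (hM : Module.IsTorsionBySet S M J) : IsSemisimpleModule S M :=
  let := hM.module
  hM.isSemisimpleModule_iff.1 inferInstance

variable {G P X Y : Type u} [AddCommGroup G] [Module S G] [AddCommGroup P] [Module S P]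
  [AddCommGroup X] [Module S X] [AddCommGroup Y] [Module S Y]

theorem ModFlat.ker_inf_smul_top_le (hG : ModFlat S G) {p : P →ₗ[S] G}
    (hp : Function.Surjective p) (J : Ideal S) :
    LinearMap.ker p ⊓ J • ⊤ ≤ J • LinearMap.ker p := by
  rintro x ⟨hxp, hxJ⟩
  obtain ⟨n, j, m, hj, rfl⟩ := exists_sum_eq_of_mem_smul_top hxJ
  obtain ⟨k, b, y, hmy, hjb⟩ :=
    hG n j (fun i => p (m i)) (by simpa only [map_sum, map_smul] using LinearMap.mem_ker.1 hxp)
  choose y' hy' using fun t => hp (y t)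
  have hker : ∀ i, m i - ∑ t, b i t • y' t ∈ LinearMap.ker p := fun i => by
    simp only [LinearMap.mem_ker, map_sub, map_sum, map_smul, hy', ← hmy, sub_self]
  have hsum : ∑ i, j i • m i = ∑ i, j i • (m i - ∑ t, b i t • y' t) := by
    simp only [smul_sub, Finset.sum_sub_distrib, Finset.smul_sum, smul_smul]
    rw [Finset.sum_comm]
    simp only [← Finset.sum_smul, hjb, zero_smul, Finset.sum_const_zero, sub_zero]
  rw [hsum]
  exact sum_mem fun i _ => smul_mem_smul (hj i) (hker i)

theorem ModFlat.exists_rightInverse (hG : ModFlat S G) {p : P →ₗ[S] G}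
    (hp : Function.Surjective p) (J : Ideal S)
    [IsSemisimpleModule S (P ⧸ J • (⊤ : Submodule S P))] (hJ : J • LinearMap.ker p = ⊥) :
    ∃ s : G →ₗ[S] P, p ∘ₗ s = LinearMap.id := by
  obtain ⟨K, hK⟩ := exists_isCompl_of_disjoint (L := J • (⊤ : Submodule S P))
    (disjoint_iff.2 (le_bot_iff.1 (hJ ▸ hG.ker_inf_smul_top_le hp J)))
  let e := p.quotKerEquivOfSurjective hp
  refine ⟨K.subtype ∘ₗ (quotientEquivOfIsCompl _ K hK).toLinearMap ∘ₗ e.symm.toLinearMap,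
    LinearMap.ext fun y => ?_⟩
  set z := quotientEquivOfIsCompl _ K hK (e.symm y)
  have hz : Submodule.Quotient.mk (z : P) = e.symm y := by
    rw [← quotientEquivOfIsCompl_symm_apply _ K hK, LinearEquiv.symm_apply_apply]
  have := congrArg e hz
  rwa [LinearEquiv.apply_symm_apply, LinearMap.quotKerEquivOfSurjective_apply_mk] at this

theorem ModFlat.exists_lift (hG : ModFlat S G) (J : Ideal S) [J.IsTwoSided]
    [IsSemisimpleRing (S ⧸ J)] {q : X →ₗ[S] Y} (hq : Function.Surjective q)
    (hJ : J • LinearMap.ker q = ⊥) (g : G →ₗ[S] Y) : ∃ h : G →ₗ[S] X, q ∘ₗ h = g := by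
  let P := LinearMap.ker (g ∘ₗ LinearMap.fst S G X - q ∘ₗ LinearMap.snd S G X)
  have hP : ∀ z : P, g (z : G × X).1 = q (z : G × X).2 := fun z =>
    sub_eq_zero.1 (LinearMap.mem_ker.1 z.2)
  let p : P →ₗ[S] G := LinearMap.fst S G X ∘ₗ P.subtype
  have hp : Function.Surjective p := fun y => by
    obtain ⟨x, hx⟩ := hq (g y)
    exact ⟨⟨(y, x), LinearMap.mem_ker.2 (sub_eq_zero.2 hx.symm)⟩, rfl⟩
  have hJp : J • LinearMap.ker p = ⊥ := by
    refine eq_bot_iff.2 (smul_le.2 fun j hj z hz => ?_)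
    have hz1 : (z : G × X).1 = 0 := hz
    have hz2 : (z : G × X).2 ∈ LinearMap.ker q := by
      rw [LinearMap.mem_ker, ← hP, hz1, map_zero]
    have hjz : j • (z : G × X).2 = 0 := (eq_bot_iff.1 hJ) (smul_mem_smul hj hz2)
    exact (mem_bot S).2 (Subtype.ext (Prod.ext
      (show j • (z : G × X).1 = 0 by rw [hz1, smul_zero]) (show j • (z : G × X).2 = 0 from hjz)))
  have : IsSemisimpleModule S (P ⧸ J • (⊤ : Submodule S P)) :=
    (Module.isTorsionBySet_quotient_ideal_smul P J).isSemisimpleModule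
  obtain ⟨s, hs⟩ := hG.exists_rightInverse hp J hJp
  refine ⟨LinearMap.snd S G X ∘ₗ P.subtype ∘ₗ s, LinearMap.ext fun y => ?_⟩
  have hsy : ((s y : P) : G × X).1 = y := LinearMap.congr_fun hs y
  simp [← hP, hsy]

theorem ModFlat.exists_factor_comp_eq (hG : ModFlat S G) (J : Ideal S) [J.IsTwoSided]
    [IsSemisimpleRing (S ⧸ J)] {U V : Submodule S P} (hUV : U ≤ V) (hJ : J • V ≤ U)
    (ψ : G →ₗ[S] P ⧸ V) : ∃ ψ' : G →ₗ[S] P ⧸ U, factor hUV ∘ₗ ψ' = ψ := by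
  refine hG.exists_lift J (fun z => ?_) (eq_bot_iff.2 (smul_le.2 fun j hj z hz => ?_)) ψ
  · obtain ⟨x, rfl⟩ := V.mkQ_surjective z
    exact ⟨U.mkQ x, rfl⟩
  · obtain ⟨x, rfl⟩ := U.mkQ_surjective z
    have hx : x ∈ V := by
      rwa [LinearMap.mem_ker, Submodule.factor_mk, Submodule.mkQ_apply,
        Submodule.Quotient.mk_eq_zero] at hz
    rw [mem_bot, ← map_smul, Submodule.mkQ_apply, Submodule.Quotient.mk_eq_zero]
    exact hJ (smul_mem_smul hj hx)

end FlatLifting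

section Jacobson

variable {S : Type u} [Ring S] (I : Ideal S) [I.IsTwoSided]

theorem Ideal.comap_mk_jacobson_quotient :
    (Ring.jacobson (S ⧸ I)).comap (Ideal.Quotient.mk I) = I.jacobson := by
  rw [← Ideal.jacobson_bot, Ideal.comap_jacobson_of_surjective Ideal.Quotient.mk_surjective,
    ← RingHom.ker_eq_comap_bot, Ideal.mk_ker]

instance Ideal.isTwoSided_jacobson : I.jacobson.IsTwoSided := by
  rw [← Ideal.comap_mk_jacobson_quotient]
  infer_instance

variable [IsArtinianRing (S ⧸ I)]

instance Ideal.isSemisimpleRing_quotient_jacobson : IsSemisimpleRing (S ⧸ I.jacobson) := by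
  let f := (Ideal.Quotient.mk (Ring.jacobson (S ⧸ I))).comp (Ideal.Quotient.mk I)
  have hf : Function.Surjective f :=
    Ideal.Quotient.mk_surjective.comp Ideal.Quotient.mk_surjective
  have hker : RingHom.ker f = I.jacobson := by
    rw [← RingHom.comap_ker, Ideal.mk_ker, Ideal.comap_mk_jacobson_quotient]
  exact ((Ideal.quotEquivOfEq hker).symm.trans
    (RingHom.quotientKerEquivOfSurjective hf)).symm.isSemisimpleRing

theorem Ideal.exists_jacobson_pow_le : ∃ N : ℕ, I.jacobson ^ N ≤ I := by
  obtain ⟨N, hN⟩ := IsSemiprimaryRing.isNilpotent (R := S ⧸ I)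
  have hpow : ∀ n, I.jacobson ^ n ≤ (Ring.jacobson (S ⧸ I) ^ n).comap (Ideal.Quotient.mk I) := by
    intro n
    induction n with
    | zero => simp [Submodule.pow_zero, Ideal.one_eq_top]
    | succ n ih =>
      rw [Ideal.IsTwoSided.pow_succ, Ideal.IsTwoSided.pow_succ, Ideal.mul_le]
      intro r hr s hs
      rw [Ideal.mem_comap, map_mul]
      exact Ideal.mul_mem_mul ((Ideal.comap_mk_jacobson_quotient I).ge hr) (ih hs)
  refine ⟨N, fun x hx => ?_⟩
  have hx' := hpow N hx
  rw [hN, Ideal.mem_comap, Submodule.zero_eq_bot, Ideal.mem_bot] at hx'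
  exact Ideal.Quotient.eq_zero_iff_mem.1 hx'

end Jacobson

section Central

variable {R S : Type u} [CommRing R] [Ring S] [Algebra R S] (a : Ideal R)

instance Ideal.isTwoSided_map_algebraMap : (a.map (algebraMap R S)).IsTwoSided where
  mul_mem_of_left b ha := by
    refine Submodule.span_induction (p := fun x _ => x * b ∈ a.map (algebraMap R S))
      ?_ ?_ ?_ ?_ ha
    · rintro _ ⟨r, hr, rfl⟩
      rw [Algebra.commutes]
      exact Ideal.mul_mem_left _ b (Ideal.mem_map_of_mem _ hr)
    · rw [zero_mul]
      exact zero_mem _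
    · intro x y _ _ hx hy
      rw [add_mul]
      exact add_mem hx hy
    · intro s x _ hx
      rw [smul_eq_mul, mul_assoc]
      exact Ideal.mul_mem_left _ s hx

instance Ideal.isArtinianRing_quotient_map_algebraMap [Module.Finite R S]
    [IsArtinianRing (R ⧸ a)] : IsArtinianRing (S ⧸ a.map (algebraMap R S)) := by
  let := Ideal.Quotient.algebraQuotientOfLEComap
    (Ideal.le_comap_map (f := algebraMap R S) (I := a))
  have : IsScalarTower R (R ⧸ a) (S ⧸ a.map (algebraMap R S)) :=
    IsScalarTower.of_algebraMap_eq fun _ => rfl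
  have : Module.Finite R (S ⧸ a.map (algebraMap R S)) :=
    Module.Finite.of_surjective (Ideal.Quotient.mkₐ R _).toLinearMap
      (Ideal.Quotient.mkₐ_surjective R _)
  have : Module.Finite (R ⧸ a) (S ⧸ a.map (algebraMap R S)) :=
    Module.Finite.of_restrictScalars_finite R _ _
  exact IsArtinianRing.of_finite (R ⧸ a) _

variable {M : Type*} [AddCommGroup M] [Module S M] [Module R M] [IsScalarTower R S M]

theorem Submodule.map_algebraMap_smul_le (X : Submodule S M) :
    ((a.map (algebraMap R S) • X).restrictScalars R) ≤ a • X.restrictScalars R := by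
  have hstable : ∀ (s : S) {x : M}, x ∈ a • X.restrictScalars R →
      s • x ∈ a • X.restrictScalars R := fun s x hx =>
    Submodule.smul_induction_on hx
      (fun r hr y hy => by
        rw [smul_comm s r y]
        exact Submodule.smul_mem_smul hr (X.smul_mem s hy))
      (fun _ _ h₁ h₂ => by rw [smul_add]; exact add_mem h₁ h₂)
  intro x hx
  rw [Submodule.restrictScalars_mem] at hx
  refine Submodule.smul_induction_on hx (fun u hu m hm => ?_) (fun _ _ => add_mem)
  induction hu using Submodule.span_induction with
  | mem _ h =>
    obtain ⟨r, hr, rfl⟩ := h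
    rw [algebraMap_smul]
    exact Submodule.smul_mem_smul hr hm
  | zero => rw [zero_smul]; exact zero_mem _
  | add u v _ _ hu hv => rw [add_smul]; exact add_mem hu hv
  | smul s u _ hu => rw [smul_eq_mul, mul_smul]; exact hstable s hu

end Central

section AdicFiltration

variable {R S : Type u} [CommRing R] [Ring S] [Algebra R S] {a : Ideal R} {J : Ideal S}
  {M : Type*} [AddCommGroup M] [Module S M] [Module R M] [IsScalarTower R S M]

theorem Submodule.iterate_smul_eq_pow_smul [J.IsTwoSided] (X : Submodule S M) (n : ℕ) :
    (J • ·)^[n] X = J ^ n • X := by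
  induction n with
  | zero => rw [Function.iterate_zero_apply, Submodule.pow_zero, Submodule.one_smul]
  | succ n ih =>
    rw [Function.iterate_succ_apply', ih, Ideal.IsTwoSided.pow_succ, ← Ideal.smul_eq_mul,
      Submodule.smul_assoc]

theorem Submodule.smul_restrictScalars_le (h : a.map (algebraMap R S) ≤ J) (X : Submodule S M) :
    a • X.restrictScalars R ≤ (J • X).restrictScalars R :=
  Submodule.smul_le.2 fun r hr x hx => by
    have hrx := Submodule.smul_mem_smul (h (Ideal.mem_map_of_mem _ hr)) (show x ∈ X from hx)
    rwa [algebraMap_smul] at hrx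

theorem Submodule.pow_smul_le_iterate_smul (h : a.map (algebraMap R S) ≤ J)
    (X : Submodule S M) (n : ℕ) :
    a ^ n • X.restrictScalars R ≤ ((J • ·)^[n] X).restrictScalars R := by
  induction n with
  | zero => rw [pow_zero, Ideal.one_eq_top, Submodule.top_smul, Function.iterate_zero_apply]
  | succ n ih =>
    rw [pow_succ', Submodule.mul_smul, Function.iterate_succ_apply']
    exact (Submodule.smul_mono le_rfl ih).trans (Submodule.smul_restrictScalars_le h _)

theorem Submodule.iterate_smul_le_pow_smul [J.IsTwoSided] {N : ℕ}
    (hN : J ^ N ≤ a.map (algebraMap R S)) (X : Submodule S M) (k : ℕ) :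
    ((J • ·)^[N * k] X).restrictScalars R ≤ a ^ k • X.restrictScalars R := by
  induction k with
  | zero => rw [pow_zero, Ideal.one_eq_top, Submodule.top_smul, Nat.mul_zero,
      Function.iterate_zero_apply]
  | succ k ih =>
    rw [Nat.mul_succ, add_comm, Function.iterate_add_apply, Submodule.iterate_smul_eq_pow_smul,
      pow_succ', Submodule.mul_smul]
    set Y := (J • ·)^[N * k] X
    calc (J ^ N • Y).restrictScalars R
        ≤ (a.map (algebraMap R S) • Y).restrictScalars R :=
          Submodule.restrictScalars_mono R (Submodule.smul_mono_left hN)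
      _ ≤ a • Y.restrictScalars R := Submodule.map_algebraMap_smul_le a Y
      _ ≤ a • a ^ k • X.restrictScalars R := Submodule.smul_mono le_rfl ih

end AdicFiltration

section Completion

variable {R S : Type u} [CommRing R] [Ring S] [Algebra R S] {a : Ideal R}
  {F : Type u} [AddCommGroup F] [Module S F] [Module R F] [IsScalarTower R S F]
  {D : ℕ → Submodule S F}

theorem sub_mem_of_le_of_forall_sub_succ_mem (hD : Antitone D) {c : ℕ → F}
    (hc : ∀ n, c (n + 1) - c n ∈ D n) {m n : ℕ} (h : m ≤ n) : c n - c m ∈ D m := by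
  induction h with
  | refl => rw [sub_self]; exact zero_mem _
  | step h ih => rw [← sub_add_sub_cancel]; exact add_mem (hD h (hc _)) ih

variable (hD : Antitone D) {N : ℕ}
  (hle_pow : ∀ k, (D (N * k)).restrictScalars R ≤ a ^ k • ⊤)
  (hpow_le : ∀ n, a ^ (n + 1) • ⊤ ≤ (D n).restrictScalars R)
include hD hle_pow hpow_le

theorem exists_forall_sub_mem_of_isPrecomplete [IsPrecomplete a F] {c : ℕ → F}
    (hc : ∀ n, c (n + 1) - c n ∈ D n) : ∃ L, ∀ n, L - c n ∈ D n := by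
  have hmono : ∀ {m n}, m ≤ n → c n - c m ∈ D m := sub_mem_of_le_of_forall_sub_succ_mem hD hc
  obtain ⟨L, hL⟩ := IsPrecomplete.prec ‹_› (f := fun k => c (N * k)) fun {k l} hkl => by
    rw [SModEq.sub_mem, ← neg_sub]
    exact neg_mem (hle_pow k (hmono (Nat.mul_le_mul_left N hkl)))
  refine ⟨L, fun n => ?_⟩
  have h₁ : L - c (N * (n + 1)) ∈ D n := by
    rw [← neg_sub]
    exact neg_mem (hpow_le n (SModEq.sub_mem.1 (hL (n + 1))))
  have h₂ : c (N * (n + 1)) - c (N * (n + 1) + n) ∈ D n := by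
    rw [← neg_sub]
    exact neg_mem (hpow_le n (hle_pow (n + 1) (hmono (Nat.le_add_right _ _))))
  have h₃ : c (N * (n + 1) + n) - c n ∈ D n := hmono (Nat.le_add_left _ _)
  have hsplit : L - c n = (L - c (N * (n + 1))) + (c (N * (n + 1)) - c (N * (n + 1) + n)) +
      (c (N * (n + 1) + n) - c n) := by abel
  rw [hsplit]
  exact add_mem (add_mem h₁ h₂) h₃

omit hD hpow_le in
theorem eq_zero_of_forall_mem_of_isHausdorff [IsHausdorff a F] {y : F} (hy : ∀ n, y ∈ D n) :
    y = 0 :=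
  (inferInstance : IsHausdorff a F).haus y fun k => SModEq.zero.2 (hle_pow k (hy _))

variable {G : Type*} [AddCommGroup G] [Module S G]

theorem exists_linearMap_mkQ_comp_eq [IsAdicComplete a F] (φ : ∀ n, G →ₗ[S] F ⧸ D n)
    (hφ : ∀ n, Submodule.factor (hD n.le_succ) ∘ₗ φ (n + 1) = φ n) :
    ∃ h : G →ₗ[S] F, ∀ n, (D n).mkQ ∘ₗ h = φ n := by
  have hlim : ∀ x, ∃ y : F, ∀ n, (D n).mkQ y = φ n x := by
    intro x
    choose c hc using fun n => (D n).mkQ_surjective (φ n x)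
    obtain ⟨L, hL⟩ :=
        exists_forall_sub_mem_of_isPrecomplete hD hle_pow hpow_le (c := c) fun n => by
      rw [← Submodule.Quotient.eq, ← Submodule.mkQ_apply, ← Submodule.mkQ_apply,
        ← Submodule.factor_mk (hD n.le_succ), hc, hc, ← hφ n, LinearMap.comp_apply]
    exact ⟨L, fun n => by
      rw [Submodule.mkQ_apply, (Submodule.Quotient.eq _).2 (hL n), ← Submodule.mkQ_apply, hc]⟩
  choose h hh using hlim
  have hsep : ∀ y, (∀ n, (D n).mkQ y = 0) → y = 0 := fun y hy =>
    eq_zero_of_forall_mem_of_isHausdorff hle_pow fun n => (Quotient.mk_eq_zero _).1 (hy n)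
  refine ⟨{ toFun := h, map_add' := fun x y => ?_, map_smul' := fun s x => ?_ },
    fun n => LinearMap.ext (hh · n)⟩
  · exact sub_eq_zero.1 (hsep _ fun n => by
      rw [map_sub, map_add, hh, hh, hh, map_add, sub_self])
  · exact sub_eq_zero.1 (hsep _ fun n => by
      rw [map_sub, map_smul, hh, hh, map_smul, RingHom.id_apply, sub_self])

theorem exists_mkQ_comp_eq_of_forall_exists_factor_comp_eq [IsAdicComplete a F]
    (hstep : ∀ n (ψ : G →ₗ[S] F ⧸ D n), ∃ ψ' : G →ₗ[S] F ⧸ D (n + 1),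
      Submodule.factor (hD n.le_succ) ∘ₗ ψ' = ψ)
    (g : G →ₗ[S] F ⧸ D 0) : ∃ h : G →ₗ[S] F, (D 0).mkQ ∘ₗ h = g := by
  choose lift hlift using hstep
  let φ : ∀ n, G →ₗ[S] F ⧸ D n := fun n => Nat.rec g (fun n ψ => lift n ψ) n
  obtain ⟨h, hh⟩ := exists_linearMap_mkQ_comp_eq hD hle_pow hpow_le φ fun n => hlift n (φ n)
  exact ⟨h, hh 0⟩

end Completion

theorem LinearMap.bijective_of_forall_sub_mem_smul_top {R M : Type*} [CommRing R]
    [AddCommGroup M] [Module R M] {a : Ideal R} [IsAdicComplete a M] (g : M →ₗ[R] M)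
    (hg : ∀ x, g x - x ∈ a • (⊤ : Submodule R M)) : Function.Bijective g := by
  have hshift : ∀ k, ∀ x ∈ a ^ k • (⊤ : Submodule R M),
      g x - x ∈ a ^ (k + 1) • (⊤ : Submodule R M) := by
    intro k x hx
    have hmap : (a ^ k • ⊤ : Submodule R M).map (g - LinearMap.id) ≤ a ^ (k + 1) • ⊤ := by
      rw [Submodule.map_smul'', pow_succ, Submodule.mul_smul]
      exact Submodule.smul_mono le_rfl (Submodule.map_le_iff_le_comap.2 fun y _ => hg y)
    exact hmap (Submodule.mem_map_of_mem hx)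
  refine ⟨(injective_iff_map_eq_zero g).2 fun x hx =>
    (inferInstance : IsHausdorff a M).haus x fun k => SModEq.zero.2 ?_,
    surjective_of_mkQ_comp_surjective (I := a) ?_⟩
  · induction k with
    | zero => simp
    | succ k ih => simpa [hx] using neg_mem (hshift k x ih)
  · have hmk : (a • ⊤ : Submodule R M).mkQ ∘ₗ g = (a • ⊤ : Submodule R M).mkQ :=
      LinearMap.ext fun x => (Submodule.Quotient.eq _).2 (hg x)
    rw [hmk]
    exact Submodule.mkQ_surjective _

theorem idealSMulSub_restrictScalars {R A : Type u} [CommRing R] [Ring A] [Algebra R A]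
    (a : Ideal R) (M : Type u) [AddCommGroup M] [Module R M] [Module Aᵐᵒᵖ M]
    [IsScalarTower R Aᵐᵒᵖ M] :
    (idealSMulSub (A := A) a M).restrictScalars R = a • ⊤ :=
  rfl

theorem flat_cover_onto_reduction_mod_artinian_ideal_general
    {R A : Type u} [CommRing R] [Ring A] [Algebra R A]
    [Module.Finite R A]
    (a : Ideal R) (hart : IsArtinianRing (R ⧸ a))
    (F : Type u) [AddCommGroup F] [Module R F] [Module Aᵐᵒᵖ F] [IsScalarTower R Aᵐᵒᵖ F]
    (hflat : ModFlat Aᵐᵒᵖ F) (hcomp : IsAdicComplete a F) :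
    IsFlatCover (idealSMulSub (A := A) a F).mkQ := by
  have : IsArtinianRing (R ⧸ a) := hart
  have : IsAdicComplete a F := hcomp
  have : Module.Finite R Aᵐᵒᵖ := Module.Finite.equiv (MulOpposite.opLinearEquiv R)
  set J := (a.map (algebraMap R Aᵐᵒᵖ)).jacobson
  obtain ⟨N, hN⟩ := (a.map (algebraMap R Aᵐᵒᵖ)).exists_jacobson_pow_le
  let D : ℕ → Submodule Aᵐᵒᵖ F := fun n => (J • ·)^[n] (idealSMulSub a F)
  have hD : ∀ n, D (n + 1) = J • D n := fun n => Function.iterate_succ_apply' _ n _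
  have hanti : Antitone D := antitone_nat_of_succ_le fun n => (hD n).trans_le smul_le_right
  refine ⟨hflat, fun G _ _ hG g => ?_, fun g hg => ?_⟩
  · refine exists_mkQ_comp_eq_of_forall_exists_factor_comp_eq hanti (a := a) (N := N)
      (fun k => (iterate_smul_le_pow_smul hN _ k).trans (smul_mono le_rfl le_top))
      (fun n => ?_) (fun n ψ => hG.exists_factor_comp_eq J _ (hD n).ge ψ) g
    rw [pow_succ, Submodule.mul_smul, ← idealSMulSub_restrictScalars (A := A)]
    exact pow_smul_le_iterate_smul Ideal.le_jacobson _ n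
  · exact (g.restrictScalars R).bijective_of_forall_sub_mem_smul_top fun x =>
      (Submodule.Quotient.eq _).1 (LinearMap.congr_fun hg x)

/-- Let `A` be a Noether `R`-algebra and `a ⊆ R` an ideal with `R/a`
artinian. For every `a`-adically complete flat right `A`-module `F`, the canonical map
`F → F ⊗_R (R/a)` (realized as the quotient map `F → F/aF`) is a flat cover. -/
theorem flat_cover_onto_reduction_mod_artinian_ideal
    {R A : Type u} [CommRing R] [IsNoetherianRing R] [Ring A] [Algebra R A]
    [Module.Finite R A]
    (a : Ideal R) (hart : IsArtinianRing (R ⧸ a))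
    (F : Type u) [AddCommGroup F] [Module R F] [Module Aᵐᵒᵖ F] [IsScalarTower R Aᵐᵒᵖ F]
    (hflat : ModFlat Aᵐᵒᵖ F) (hcomp : IsAdicComplete a F) :
    IsFlatCover (idealSMulSub (A := A) a F).mkQ :=
  flat_cover_onto_reduction_mod_artinian_ideal_general a hart F hflat hcomp
end

section
/- Let (R, m, k) be a commutative noetherian local ring and A a Noether R-algebra. For every maximal two-sided ideal P of A there is an isomorphism Hom_R(S_{A^op}(P), E_R(k)) ≅ S_A(P) of right A-modules. Consequently, the assignment S_{A^op}(P) ↦ S_A(P) is a bijection between the set of isomorphism classes of simple left A-modules and the set of isomorphism classes of simple right A-modules. -/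
/-!
Common definitions: module-theoretic notions over a (possibly noncommutative) ring,
notions relative to a central base ring, and Hom-module structures.
Right `A`-modules are treated as left `Aᵐᵒᵖ`-modules.
-/

universe u

open MulOpposite

/-- A bundled module over a ring `S`. -/
structure ModuleOver (S : Type u) [Ring S] : Type (u + 1) where
  carrier : Type u
  [addCommGroup : AddCommGroup carrier]
  [mod : Module S carrier]

attribute [instance] ModuleOver.addCommGroup ModuleOver.mod

/-!
A simple module `S` over a finite `R`-algebra is finite over `R`, so by Nakayama it is killed by
`m` and is a finite-dimensional `k`-vector space. Elements of `E` killed by `m` lie in `k`,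
since `k → E` is essential; hence `Hom_R(S, E) = Hom_k(S, k)`, and `k`-linear duality makes
`Hom_R(-, E)` separate points and the evaluation `S → Hom_R(Hom_R(S, E), E)` surjective.
Consequently `Hom_R(S, E)` is simple, with the same annihilator as `S`.

Simple modules that are finitely generated over a central subring are determined by their
annihilators: if `x₁, …, xₙ` generate `S`, then `b ↦ (b xᵢ)ᵢ` embeds `B ⧸ ann S` into the
semisimple module `Sⁿ`, so any simple `T` with `ann S ⊆ ann T`, being a quotient of `B ⧸ ann S`,
receives a nonzero map from `Sⁿ`, hence from `S`.
-/

open IsLocalRing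

theorem IsSimpleModule.finite_of_isScalarTower {R : Type*} [CommRing R] (B : Type*) [Ring B]
    [Algebra R B] [Module.Finite R B] (S : Type*) [AddCommGroup S] [Module R S] [Module B S]
    [IsScalarTower R B S] [IsSimpleModule B S] : Module.Finite R S :=
  Module.Finite.trans B S

theorem IsSimpleModule.isTorsionBySet_maximalIdeal {R : Type*} [CommRing R] [IsLocalRing R]
    (B : Type*) [Ring B] [Algebra R B] [Module.Finite R B] (S : Type*) [AddCommGroup S]
    [Module R S] [Module B S] [IsScalarTower R B S] [IsSimpleModule B S] :
    Module.IsTorsionBySet R S (maximalIdeal R) := by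
  have := IsSimpleModule.finite_of_isScalarTower (R := R) B S
  have := IsSimpleModule.nontrivial B S
  rintro x ⟨r, hr⟩
  rcases (algebraMap R (Module.End B S) r).bijective_or_eq_zero with hbij | h0
  · have htop : (⊤ : Submodule R S) ≤ maximalIdeal R • ⊤ := fun y _ => by
      obtain ⟨z, rfl⟩ := hbij.2 y
      exact Submodule.smul_mem_smul hr Submodule.mem_top
    have := Submodule.eq_bot_of_le_smul_of_le_jacobson_bot (maximalIdeal R) ⊤
      Module.Finite.fg_top htop (maximalIdeal_le_jacobson ⊥)
    exact absurd this top_ne_bot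
  · exact LinearMap.congr_fun h0 x

theorem Module.IsTorsionBySet.linearMap {R : Type*} [CommRing R] {I : Ideal R} {M E : Type*}
    [AddCommGroup M] [Module R M] [AddCommGroup E] [Module R E] (hM : Module.IsTorsionBySet R M I) :
    Module.IsTorsionBySet R (M →ₗ[R] E) I := by
  intro f r
  ext x
  rw [LinearMap.smul_apply, ← map_smul, hM, map_zero, LinearMap.zero_apply]

theorem IsSemisimpleModule.exists_comp_eq_of_ker_le {B M N P : Type*} [Ring B]
    [AddCommGroup M] [Module B M] [AddCommGroup N] [Module B N] [IsSemisimpleModule B N]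
    [AddCommGroup P] [Module B P] (φ : M →ₗ[B] N) (θ : M →ₗ[B] P)
    (h : LinearMap.ker φ ≤ LinearMap.ker θ) : ∃ ψ : N →ₗ[B] P, ψ ∘ₗ φ = θ := by
  obtain ⟨ψ, hψ⟩ := IsSemisimpleModule.extension_property ((LinearMap.ker φ).liftQ φ le_rfl)
    (LinearMap.ker_eq_bot.mp (Submodule.ker_liftQ_eq_bot _ _ _ le_rfl))
    ((LinearMap.ker φ).liftQ θ h)
  refine ⟨ψ, LinearMap.ext fun m => ?_⟩
  simpa using LinearMap.congr_fun hψ (Submodule.Quotient.mk m)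

theorem IsSimpleModule.nonempty_linearEquiv_of_annihilator_le {R B S T : Type*} [CommSemiring R]
    [Ring B] [AddCommGroup S] [Module R S] [Module B S] [SMulCommClass B R S] [Module.Finite R S]
    [IsSimpleModule B S] [AddCommGroup T] [Module B T] [IsSimpleModule B T]
    (h : ∀ b : B, (∀ x : S, b • x = 0) → ∀ y : T, b • y = 0) : Nonempty (S ≃ₗ[B] T) := by
  obtain ⟨n, x, hx⟩ := Module.Finite.exists_fin (R := R) (M := S)
  have := IsSimpleModule.nontrivial B T
  obtain ⟨y, hy⟩ := exists_ne (0 : T)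
  let φ : B →ₗ[B] (Fin n → S) := LinearMap.pi fun i => LinearMap.toSpanSingleton B S (x i)
  have hker : LinearMap.ker φ ≤ LinearMap.ker (LinearMap.toSpanSingleton B T y) := by
    intro b hb
    have hbx : DistribSMul.toLinearMap R S b = 0 :=
      LinearMap.ext_on_range hx fun i => congrFun (LinearMap.mem_ker.mp hb) i
    exact h b (LinearMap.congr_fun hbx) y
  have : IsSemisimpleModule B (Fin n → S) :=
    .congr (Finsupp.linearEquivFunOnFinite B S (Fin n)).symm
  obtain ⟨ψ, hψ⟩ := IsSemisimpleModule.exists_comp_eq_of_ker_le φ _ hker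
  obtain ⟨i, hi⟩ : ∃ i, ψ ∘ₗ LinearMap.single B (fun _ => S) i ≠ 0 := by
    by_contra! hψ0
    have hψ0 : ψ = 0 := LinearMap.pi_ext' fun i => by rw [hψ0 i, LinearMap.zero_comp]
    have h1 := LinearMap.congr_fun hψ 1
    rw [hψ0, LinearMap.zero_comp, LinearMap.zero_apply, LinearMap.toSpanSingleton_apply,
      one_smul] at h1
    exact hy h1.symm
  exact ⟨.ofBijective _ (LinearMap.bijective_of_ne_zero hi)⟩

theorem IsSimpleModule.of_mulOpposite_mulOpposite {A X : Type*} [Ring A] [AddCommGroup X]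
    [Module A X] [Module Aᵐᵒᵖᵐᵒᵖ X] (h : ∀ (a : A) (x : X), op (op a) • x = a • x)
    [IsSimpleModule Aᵐᵒᵖᵐᵒᵖ X] : IsSimpleModule A X :=
  (LinearMap.isSimpleModule_iff_of_bijective (σ := (RingEquiv.opOp A : A →+* Aᵐᵒᵖᵐᵒᵖ))
    { toFun := id, map_add' := fun _ _ => rfl, map_smul' := fun a x => (h a x).symm }
    Function.bijective_id).mpr inferInstance

section MatlisDual

variable {R : Type u} [CommRing R] [IsLocalRing R] {E : Type u} [AddCommGroup E] [Module R E]
  {e : ResidueField R →ₗ[R] E}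

theorem IsInjEnvelope.mem_range_of_forall_smul_eq_zero (he : IsInjEnvelope e) {x : E}
    (hx : ∀ r ∈ maximalIdeal R, r • x = 0) : x ∈ LinearMap.range e := by
  by_contra hxe
  have hdisj : (R ∙ x) ⊓ LinearMap.range e = ⊥ := by
    refine eq_bot_iff.mpr fun y ⟨hy, hye⟩ => ?_
    obtain ⟨r, rfl⟩ := Submodule.mem_span_singleton.mp hy
    by_cases hr : r ∈ maximalIdeal R
    · simp [hx r hr]
    · obtain ⟨u, rfl⟩ := notMem_maximalIdeal.mp hr
      refine absurd ?_ hxe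
      simpa using Submodule.smul_mem _ (↑u⁻¹ : R) hye
  have hx0 : x = 0 := by simpa [Submodule.span_singleton_eq_bot] using he.2.2 _ hdisj
  exact hxe (hx0 ▸ Submodule.zero_mem _)

theorem IsInjEnvelope.exists_restrictScalars_comp_eq (he : IsInjEnvelope e) {M : Type*}
    [AddCommGroup M] [Module R M] [Module (ResidueField R) M]
    [IsScalarTower R (ResidueField R) M] (f : M →ₗ[R] E) :
    ∃ φ : Module.Dual (ResidueField R) M, e ∘ₗ φ.restrictScalars R = f := by
  have hf : ∀ x, f x ∈ LinearMap.range e := fun x =>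
    he.mem_range_of_forall_smul_eq_zero fun r hr => by
      rw [← map_smul, ← algebraMap_smul (ResidueField R) r x, ResidueField.algebraMap_eq,
        (residue_eq_zero_iff r).mpr hr, zero_smul, map_zero]
  let g : M →ₗ[R] ResidueField R :=
    (LinearEquiv.ofInjective e he.1).symm.toLinearMap ∘ₗ f.codRestrict _ hf
  refine ⟨g.extendScalarsOfSurjective residue_surjective, LinearMap.ext fun x => ?_⟩
  exact congrArg Subtype.val ((LinearEquiv.ofInjective e he.1).apply_symm_apply ⟨f x, hf x⟩)

theorem exists_linearMap_apply_ne_zero (he : Function.Injective e) {M : Type*}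
    [AddCommGroup M] [Module R M] (hM : Module.IsTorsionBySet R M (maximalIdeal R))
    {x : M} (hx : x ≠ 0) : ∃ f : M →ₗ[R] E, f x ≠ 0 := by
  let _ : Module (ResidueField R) M := hM.module
  have : IsScalarTower R (ResidueField R) M := hM.isScalarTower
  obtain ⟨φ, hφ⟩ : ∃ φ : Module.Dual (ResidueField R) M, φ x ≠ 0 := by
    by_contra! h
    exact hx ((Module.forall_dual_apply_eq_zero_iff _ x).mp h)
  exact ⟨e ∘ₗ φ.restrictScalars R, fun h => hφ (he (h.trans (map_zero e).symm))⟩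

theorem IsInjEnvelope.exists_apply_eq (he : IsInjEnvelope e) {M : Type*}
    [AddCommGroup M] [Module R M] [Module (ResidueField R) M]
    [IsScalarTower R (ResidueField R) M] [FiniteDimensional (ResidueField R) M]
    (Φ : (M →ₗ[R] E) →ₗ[R] E) : ∃ x : M, ∀ f : M →ₗ[R] E, f x = Φ f := by
  let ι : Module.Dual (ResidueField R) M →ₗ[R] (M →ₗ[R] E) :=
    LinearMap.compRight R e ∘ₗ LinearMap.restrictScalarsₗ (R := R) (S := ResidueField R)
      (M := M) (N := ResidueField R) (R₁ := R)
  obtain ⟨χ, hχ⟩ := he.exists_restrictScalars_comp_eq (Φ ∘ₗ ι)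
  obtain ⟨x, hx⟩ := (Module.evalEquiv (ResidueField R) M).surjective χ
  refine ⟨x, fun f => ?_⟩
  obtain ⟨φ, rfl⟩ := he.exists_restrictScalars_comp_eq f
  rw [← hx] at hχ
  exact LinearMap.congr_fun hχ φ

theorem forall_op_smul_linearMap_eq_zero_iff (he : Function.Injective e) {B : Type u} [Ring B]
    {S : Type u} [AddCommGroup S] [Module R S] [Module B S] [SMulCommClass B R S]
    (hS : Module.IsTorsionBySet R S (maximalIdeal R)) (b : B) :
    (∀ f : S →ₗ[R] E, op b • f = 0) ↔ ∀ x : S, b • x = 0 := by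
  refine ⟨fun hb x => ?_, fun hb f => LinearMap.ext fun x => ?_⟩
  · by_contra hbx
    obtain ⟨f, hf⟩ := exists_linearMap_apply_ne_zero he hS hbx
    exact hf (LinearMap.congr_fun (hb f) x)
  · rw [homRight_smul_apply, unop_op, hb x, map_zero, LinearMap.zero_apply]

theorem IsInjEnvelope.isSimpleModule_linearMap (he : IsInjEnvelope e) {B : Type u} [Ring B]
    [Algebra R B] [Module.Finite R B] {S : Type u} [AddCommGroup S] [Module R S] [Module B S]
    [IsScalarTower R B S] [IsSimpleModule B S] : IsSimpleModule Bᵐᵒᵖ (S →ₗ[R] E) := by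
  have hS := IsSimpleModule.isTorsionBySet_maximalIdeal (R := R) B S
  have := IsSimpleModule.finite_of_isScalarTower (R := R) B S
  let _ : Module (ResidueField R) S := hS.module
  have : IsScalarTower R (ResidueField R) S := hS.isScalarTower
  have : FiniteDimensional (ResidueField R) S :=
    Module.Finite.of_restrictScalars_finite R (ResidueField R) S
  have := IsSimpleModule.nontrivial B S
  obtain ⟨x₀, hx₀⟩ := exists_ne (0 : S)
  obtain ⟨f₀, hf₀⟩ := exists_linearMap_apply_ne_zero he.1 hS hx₀
  have : Nontrivial (S →ₗ[R] E) := ⟨⟨f₀, 0, fun h => hf₀ (LinearMap.congr_fun h x₀)⟩⟩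
  -- For `N ≠ ⊤`, a nonzero functional on `Hom_R(S, E) ⧸ N` is evaluation at some `x ≠ 0`;
  -- then every `f ∈ N` vanishes on `B • x = S`.
  refine { eq_bot_or_eq_top := fun N => or_iff_not_imp_right.mpr fun hN => ?_ }
  obtain ⟨g, hg⟩ : ∃ g, g ∉ N := by
    by_contra! h
    exact hN (eq_top_iff.mpr fun g _ => h g)
  let N' := N.restrictScalars R
  have hQ : Module.IsTorsionBySet R ((S →ₗ[R] E) ⧸ N') (maximalIdeal R) := by
    rintro ⟨f⟩ r
    exact congrArg N'.mkQ (hS.linearMap (x := f) (a := r))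
  obtain ⟨f', hf'⟩ := exists_linearMap_apply_ne_zero he.1 hQ
    (mt (Submodule.Quotient.mk_eq_zero N').mp hg)
  obtain ⟨x, hx⟩ := he.exists_apply_eq (f' ∘ₗ N'.mkQ)
  have hx₀ : x ≠ 0 := fun h => hf' ((hx g).symm.trans (by rw [h, map_zero]))
  refine eq_bot_iff.mpr fun f hf => (Submodule.mem_bot _).mpr (LinearMap.ext fun y => ?_)
  obtain ⟨b, rfl⟩ := IsSimpleModule.toSpanSingleton_surjective B hx₀ y
  have hbf : op b • f ∈ N' := N.smul_mem (op b) hf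
  change (op b • f) x = 0
  rw [hx, LinearMap.comp_apply, Submodule.mkQ_apply, (Submodule.Quotient.mk_eq_zero N').mpr hbf,
    map_zero]

theorem IsInjEnvelope.nonempty_linearEquiv_of_annihilator_le
    (he : IsInjEnvelope e) {B : Type u} [Ring B] [Algebra R B] [Module.Finite R B]
    {L : Type u} [AddCommGroup L] [Module R L] [Module B L] [IsScalarTower R B L]
    [IsSimpleModule B L] {T : Type u} [AddCommGroup T] [Module Bᵐᵒᵖ T] [IsSimpleModule Bᵐᵒᵖ T]
    (h : ∀ b : B, (∀ x : L, b • x = 0) → ∀ y : T, op b • y = 0) :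
    Nonempty ((L →ₗ[R] E) ≃ₗ[Bᵐᵒᵖ] T) := by
  have := he.isSimpleModule_linearMap (B := B) (S := L)
  have := IsSimpleModule.finite_of_isScalarTower (R := R) Bᵐᵒᵖ (L →ₗ[R] E)
  refine IsSimpleModule.nonempty_linearEquiv_of_annihilator_le (R := R) fun b hb => h (unop b) ?_
  exact (forall_op_smul_linearMap_eq_zero_iff he.1
    (IsSimpleModule.isTorsionBySet_maximalIdeal B L) (unop b)).mp hb

end MatlisDual

theorem matlis_dual_of_simple_modules_general
    {R A : Type u} [CommRing R] [IsLocalRing R]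
    [Ring A] [Algebra R A] [Module.Finite R A]
    (E : Type u) [AddCommGroup E] [Module R E]
    (e : IsLocalRing.ResidueField R →ₗ[R] E) (he : IsInjEnvelope e) :
    (∀ P : Ideal A, IsMaximalTwoSided P →
      ∀ (S : Type u) [AddCommGroup S] [Module R S] [Module A S] [IsScalarTower R A S],
        IsSimpleModule A S → {a : A | ∀ x : S, a • x = 0} = (P : Set A) →
        ∀ (S' : Type u) [AddCommGroup S'] [Module Aᵐᵒᵖ S'],
          IsSimpleModule Aᵐᵒᵖ S' → {a : A | ∀ x : S', op a • x = 0} = (P : Set A) →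
          Nonempty ((S →ₗ[R] E) ≃ₗ[Aᵐᵒᵖ] S')) ∧
    (∀ (S : Type u) [AddCommGroup S] [Module R S] [Module A S] [IsScalarTower R A S],
      IsSimpleModule A S → IsSimpleModule Aᵐᵒᵖ (S →ₗ[R] E)) ∧
    (∀ (S₁ S₂ : Type u) [AddCommGroup S₁] [Module R S₁] [Module A S₁]
      [IsScalarTower R A S₁] [AddCommGroup S₂] [Module R S₂] [Module A S₂]
      [IsScalarTower R A S₂],
      IsSimpleModule A S₁ → IsSimpleModule A S₂ →
      Nonempty ((S₁ →ₗ[R] E) ≃ₗ[Aᵐᵒᵖ] (S₂ →ₗ[R] E)) → Nonempty (S₁ ≃ₗ[A] S₂)) ∧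
    (∀ (S' : Type u) [AddCommGroup S'] [Module Aᵐᵒᵖ S'], IsSimpleModule Aᵐᵒᵖ S' →
      ∃ SL : LeftModule R A, IsSimpleModule A SL.carrier ∧
        Nonempty ((SL.carrier →ₗ[R] E) ≃ₗ[Aᵐᵒᵖ] S')) := by
  refine ⟨?_, fun S _ _ _ _ _ => he.isSimpleModule_linearMap, ?_, ?_⟩
  · intro P _ S _ _ _ _ _ hSann S' _ _ _ hS'ann
    refine he.nonempty_linearEquiv_of_annihilator_le fun a ha => ?_
    exact hS'ann.symm.subset (hSann.subset ha)
  · intro S₁ S₂ _ _ _ _ _ _ _ _ _ _ ⟨g⟩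
    have := IsSimpleModule.finite_of_isScalarTower (R := R) A S₁
    refine IsSimpleModule.nonempty_linearEquiv_of_annihilator_le (R := R) fun a ha => ?_
    have h₁ := forall_op_smul_linearMap_eq_zero_iff he.1
      (IsSimpleModule.isTorsionBySet_maximalIdeal A S₁) a
    have h₂ := forall_op_smul_linearMap_eq_zero_iff he.1
      (IsSimpleModule.isTorsionBySet_maximalIdeal A S₂) a
    exact h₂.mp fun f => g.symm.injective (by rw [map_smul, h₁.mpr ha, map_zero])
  · intro S' _ _ _
    let _ : Module R S' := Module.compHom S' (algebraMap R Aᵐᵒᵖ)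
    have : IsScalarTower R Aᵐᵒᵖ S' := IsScalarTower.of_algebraMap_smul fun _ _ => rfl
    have hS' := IsSimpleModule.isTorsionBySet_maximalIdeal (R := R) Aᵐᵒᵖ S'
    have : IsSimpleModule Aᵐᵒᵖᵐᵒᵖ (S' →ₗ[R] E) := he.isSimpleModule_linearMap
    have : IsSimpleModule A (S' →ₗ[R] E) :=
      IsSimpleModule.of_mulOpposite_mulOpposite fun _ _ => rfl
    refine ⟨⟨S' →ₗ[R] E⟩, this, he.nonempty_linearEquiv_of_annihilator_le fun a ha => ?_⟩
    -- `a` acts on `Hom_R(S', E)` as `op (op a)` does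
    exact (forall_op_smul_linearMap_eq_zero_iff he.1 hS' (op a)).mp ha

/-- Let `(R, m, k)` be a commutative noetherian local ring and `A` a
Noether `R`-algebra. For every maximal two-sided ideal `P` of `A`,
`Hom_R(S_{A^op}(P), E_R(k)) ≅ S_A(P)` as right `A`-modules, where the simple left
(resp. right) module attached to `P` is characterized by having annihilator `P`.
Consequently `S_{A^op}(P) ↦ S_A(P)` is a bijection on isomorphism classes of simple
left and simple right `A`-modules (realized by `S ↦ Hom_R(S, E_R(k))`). -/
theorem matlis_dual_of_simple_modules
    {R A : Type u} [CommRing R] [IsNoetherianRing R] [IsLocalRing R]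
    [Ring A] [Algebra R A] [Module.Finite R A]
    (E : Type u) [AddCommGroup E] [Module R E]
    (e : IsLocalRing.ResidueField R →ₗ[R] E) (he : IsInjEnvelope e) :
    (∀ P : Ideal A, IsMaximalTwoSided P →
      ∀ (S : Type u) [AddCommGroup S] [Module R S] [Module A S] [IsScalarTower R A S],
        IsSimpleModule A S → {a : A | ∀ x : S, a • x = 0} = (P : Set A) →
        ∀ (S' : Type u) [AddCommGroup S'] [Module Aᵐᵒᵖ S'],
          IsSimpleModule Aᵐᵒᵖ S' → {a : A | ∀ x : S', op a • x = 0} = (P : Set A) →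
          Nonempty ((S →ₗ[R] E) ≃ₗ[Aᵐᵒᵖ] S')) ∧
    (∀ (S : Type u) [AddCommGroup S] [Module R S] [Module A S] [IsScalarTower R A S],
      IsSimpleModule A S → IsSimpleModule Aᵐᵒᵖ (S →ₗ[R] E)) ∧
    (∀ (S₁ S₂ : Type u) [AddCommGroup S₁] [Module R S₁] [Module A S₁]
      [IsScalarTower R A S₁] [AddCommGroup S₂] [Module R S₂] [Module A S₂]
      [IsScalarTower R A S₂],
      IsSimpleModule A S₁ → IsSimpleModule A S₂ →
      Nonempty ((S₁ →ₗ[R] E) ≃ₗ[Aᵐᵒᵖ] (S₂ →ₗ[R] E)) → Nonempty (S₁ ≃ₗ[A] S₂)) ∧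
    (∀ (S' : Type u) [AddCommGroup S'] [Module Aᵐᵒᵖ S'], IsSimpleModule Aᵐᵒᵖ S' →
      ∃ SL : LeftModule R A, IsSimpleModule A SL.carrier ∧
        Nonempty ((SL.carrier →ₗ[R] E) ≃ₗ[Aᵐᵒᵖ] S')) :=
  matlis_dual_of_simple_modules_general E e he
end

section
/- Let (R, m, k) be a commutative noetherian local ring that is m-adically complete, and let A be a Noether R-algebra. Then the contravariant functor Hom_R(-, E_R(k)) sends finitely generated right A-modules to artinian left A-modules and artinian left A-modules to finitely generated right A-modules, and the two induced contravariant functors between the category of finitely generated right A-modules and the category of artinian left A-modules are mutually quasi-inverse dualities (i.e., the canonical evaluation maps M → Hom_R(Hom_R(M, E_R(k)), E_R(k)) are isomorphisms for M in either category). -/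
/-!
Common definitions: module-theoretic notions over a (possibly noncommutative) ring,
notions relative to a central base ring, and Hom-module structures.
Right `A`-modules are treated as left `Aᵐᵒᵖ`-modules.
-/

universe u

open MulOpposite

/-- The prime two-sided ideals of `A` lying over the prime `p` of `R`. -/
def PrimesOver (R A : Type u) [CommRing R] [Ring A] [Algebra R A] (p : Ideal R) : Type u :=
  {P : Ideal A // IsPrimeTwoSided P ∧ P.comap (algebraMap R A) = p}

/-- The prime two-sided ideals of `A`. -/
def PrimesNC (A : Type u) [Ring A] : Type u := {P : Ideal A // IsPrimeTwoSided P}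

/-- Precomposition with an `A`-linear map `ι : SL → I` of left `A`-modules, as an
`Aᵐᵒᵖ`-linear (right `A`-linear) map `Hom_R(I, F) → Hom_R(SL, F)`. -/
def precompHom {R A : Type u} [CommRing R] [Ring A] [Algebra R A]
    {SL I : Type u} [AddCommGroup SL] [Module R SL] [Module A SL] [IsScalarTower R A SL]
    [AddCommGroup I] [Module R I] [Module A I] [IsScalarTower R A I]
    (ι : SL →ₗ[A] I)
    (F : Type u) [AddCommGroup F] [Module R F] :
    (I →ₗ[R] F) →ₗ[Aᵐᵒᵖ] (SL →ₗ[R] F) where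
  toFun g := g ∘ₗ (ι.restrictScalars R)
  map_add' g h := LinearMap.ext fun _ => rfl
  map_smul' a g := LinearMap.ext fun x => by
    show g (a.unop • ι x) = g (ι (a.unop • x))
    exact congrArg g (ι.map_smul a.unop x).symm

section HomModules2

variable {S₀ T : Type u} [CommRing S₀] [Ring T]
variable {M E : Type u} [AddCommGroup M] [Module S₀ M] [AddCommGroup E] [Module S₀ E]

instance homLeft_smulCommClass [Module Tᵐᵒᵖ M] [SMulCommClass Tᵐᵒᵖ S₀ M] :
    SMulCommClass T S₀ (M →ₗ[S₀] E) :=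
  ⟨fun _ _ _ => LinearMap.ext fun _ => rfl⟩

instance homRight_smulCommClass [Module T M] [SMulCommClass T S₀ M] :
    SMulCommClass Tᵐᵒᵖ S₀ (M →ₗ[S₀] E) :=
  ⟨fun _ _ _ => LinearMap.ext fun _ => rfl⟩

instance homRight_smulCommClass' {S₁ : Type u} [Semiring S₁] [Module S₁ E]
    [SMulCommClass S₀ S₁ E] [Module T M] [SMulCommClass T S₀ M] :
    SMulCommClass Tᵐᵒᵖ S₁ (M →ₗ[S₀] E) :=
  ⟨fun _ _ _ => LinearMap.ext fun _ => rfl⟩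

end HomModules2

section Eval

variable (R A : Type u) [CommRing R] [Ring A] [Algebra R A]

/-- The evaluation map `M → Hom_R(Hom_R(M, E), E)` for a right `A`-module `M`,
as a map of right `A`-modules. -/
def evalRight (M : Type u) [AddCommGroup M] [Module R M] [Module Aᵐᵒᵖ M]
    [IsScalarTower R Aᵐᵒᵖ M] (E : Type u) [AddCommGroup E] [Module R E] :
    M →ₗ[Aᵐᵒᵖ] ((M →ₗ[R] E) →ₗ[R] E) where
  toFun x :=
    { toFun := fun f => f x
      map_add' := fun _ _ => rfl
      map_smul' := fun _ _ => rfl }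
  map_add' x y := LinearMap.ext fun f => f.map_add x y
  map_smul' a x := LinearMap.ext fun f => by
    show f (a • x) = f (op a.unop • x)
    rfl

/-- The evaluation map `N → Hom_R(Hom_R(N, E), E)` for a left `A`-module `N`,
as a map of left `A`-modules. -/
def evalLeft (N : Type u) [AddCommGroup N] [Module R N] [Module A N]
    [IsScalarTower R A N] (E : Type u) [AddCommGroup E] [Module R E] :
    N →ₗ[A] ((N →ₗ[R] E) →ₗ[R] E) where
  toFun x :=
    { toFun := fun f => f x
      map_add' := fun _ _ => rfl
      map_smul' := fun _ _ => rfl }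
  map_add' x y := LinearMap.ext fun f => f.map_add x y
  map_smul' a x := LinearMap.ext fun f => by
    show f (a • x) = f ((op a).unop • x)
    rfl

end Eval

/-!
Write `M∨ = Hom_R(M, E)`. As `E` is an injective cogenerator, evaluation `M → M∨∨` is always
injective, and its surjectivity (`EvalSurjective`) passes to submodules, quotients, extensions
and finite products. The socle of `E` is `e(k)`, so `k` is reflexive, hence so is every finitely
generated module killed by a power of `m`. For `R ⧸ m ^ n` this says that an endomorphism of `E`
acts on the `m ^ n`-torsion of `E` as a scalar `r n`; the `r n` form an `m`-adic Cauchy sequence,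
and as every associated prime of `E` is `m`, all of `E` is `m`-power torsion, so the limit of the
`r n` shows `End_R(E) = R`. Hence `R` and `E` are reflexive, and so is every finitely generated
module and every submodule of a finite power of `E`.

For finitely generated `M`, `X ↦ ⋂_{f ∈ X} ker f` embeds the submodules of `M∨` order-reversingly
into those of the noetherian module `M`, so `M∨` is artinian. For an artinian `A`-module `N`, the
descending chain condition yields finitely many functionals whose kernels contain no nonzero
`A`-submodule; composed with generators of `A` over `R` they embed `N` into a finite power
`E ^ ι`, and `End_R(E) = R` makes `Hom_R(E ^ ι, E) = R ^ ι` surject onto `N∨`, so `N∨` is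
finitely generated.
-/

open LinearMap Submodule IsLocalRing

section Reflexivity

def IsCogenerator (R : Type u) [CommRing R] (E : Type u) [AddCommGroup E] [Module R E] : Prop :=
  ∀ (M : Type u) [AddCommGroup M] [Module R M] (x : M), x ≠ 0 → ∃ f : M →ₗ[R] E, f x ≠ 0

def EvalSurjective (R : Type u) [CommRing R] (E : Type u) [AddCommGroup E] [Module R E]
    (M : Type*) [AddCommGroup M] [Module R M] : Prop :=
  ∀ z : (M →ₗ[R] E) →ₗ[R] E, ∃ x : M, ∀ f : M →ₗ[R] E, z f = f x

variable {R : Type u} [CommRing R] {E : Type u} [AddCommGroup E] [Module R E]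
variable {M N : Type u} [AddCommGroup M] [Module R M] [AddCommGroup N] [Module R N]

theorem exists_comp_eq_of_ker_le [Module.Injective R E] (φ : M →ₗ[R] N) (ψ : M →ₗ[R] E)
    (h : ker φ ≤ ker ψ) : ∃ g : N →ₗ[R] E, g ∘ₗ φ = ψ := by
  obtain ⟨g, hg⟩ := Module.Injective.out ((ker φ).liftQ φ le_rfl)
    (ker_eq_bot.1 ((ker φ).ker_liftQ_eq_bot' φ rfl)) ((ker φ).liftQ ψ h)
  exact ⟨g, LinearMap.ext fun x => hg (Submodule.Quotient.mk x)⟩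

namespace EvalSurjective

theorem of_subsingleton [Subsingleton M] : EvalSurjective R E M := fun z =>
  ⟨0, fun f => by rw [Subsingleton.elim f 0, map_zero, LinearMap.zero_apply]⟩

theorem of_surjective [Module.Injective R E] (π : M →ₗ[R] N) (hπ : Function.Surjective π)
    (hM : EvalSurjective R E M) : EvalSurjective R E N := by
  intro z
  have hker : ker (lcomp R E π) ≤ ker z := by
    intro f hf
    rw [mem_ker, lcomp_apply'] at hf
    have hf0 : f = 0 := (LinearMap.cancel_right hπ).1 (hf.trans (zero_comp π).symm)
    rw [mem_ker, hf0, map_zero]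
  obtain ⟨z', hz'⟩ := exists_comp_eq_of_ker_le _ z hker
  obtain ⟨x, hx⟩ := hM z'
  refine ⟨π x, fun f => ?_⟩
  rw [← hz', LinearMap.comp_apply, hx, lcomp_apply', LinearMap.comp_apply]

theorem of_injective [Module.Injective R E] (hE : IsCogenerator R E) (ι : M →ₗ[R] N)
    (hι : Function.Injective ι) (hN : EvalSurjective R E N) : EvalSurjective R E M := by
  intro z
  obtain ⟨y, hy⟩ := hN (z ∘ₗ lcomp R E ι)
  have hy_range : y ∈ range ι := by
    by_contra hy_not
    obtain ⟨ζ, hζ⟩ := hE _ (Submodule.Quotient.mk y : N ⧸ range ι)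
      ((Submodule.Quotient.mk_eq_zero _).not.2 hy_not)
    have hvanish : (ζ ∘ₗ (range ι).mkQ) ∘ₗ ι = 0 := by
      ext x
      exact (congrArg ζ ((Submodule.Quotient.mk_eq_zero _).2 (mem_range_self ι x))).trans
        ζ.map_zero
    apply hζ
    rw [← mkQ_apply, ← LinearMap.comp_apply, ← hy, LinearMap.comp_apply, lcomp_apply',
      hvanish, map_zero]
  obtain ⟨x, rfl⟩ := hy_range
  refine ⟨x, fun f => ?_⟩
  obtain ⟨g, hg⟩ := Module.Injective.out ι hι f
  have hgι : g ∘ₗ ι = f := LinearMap.ext hg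
  rw [← hgι, ← lcomp_apply' (S := R), ← LinearMap.comp_apply, hy]
  rfl

theorem pi {ι : Type*} [Finite ι] {Q : ι → Type*} [∀ i, AddCommGroup (Q i)]
    [∀ i, Module R (Q i)]
    (hQ : ∀ i, EvalSurjective R E (Q i)) : EvalSurjective R E (∀ i, Q i) := by
  classical
  have := Fintype.ofFinite ι
  intro z
  choose x hx using fun i => hQ i (z ∘ₗ lcomp R E (LinearMap.proj i))
  refine ⟨x, fun f => ?_⟩
  have hf : f = ∑ i, (f ∘ₗ LinearMap.single R Q i) ∘ₗ LinearMap.proj i := by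
    ext w
    simp only [LinearMap.coe_sum, Finset.sum_apply, LinearMap.comp_apply, LinearMap.coe_single,
      LinearMap.coe_proj, Function.eval]
    rw [← map_sum, Finset.univ_sum_single]
  calc z f = ∑ i, (f ∘ₗ LinearMap.single R Q i) (x i) := by
        rw [congrArg z hf, map_sum]
        refine Finset.sum_congr rfl fun i _ => ?_
        rw [← hx i, LinearMap.comp_apply, lcomp_apply']
    _ = f x := by
        simp only [LinearMap.comp_apply, LinearMap.coe_single]
        rw [← map_sum, Finset.univ_sum_single]

theorem of_submodule_of_quotient [Module.Injective R E] (W : Submodule R M)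
    (hW : EvalSurjective R E W) (hQ : EvalSurjective R E (M ⧸ W)) : EvalSurjective R E M := by
  intro z
  obtain ⟨q, hq⟩ := hQ (z ∘ₗ lcomp R E W.mkQ)
  obtain ⟨x₀, rfl⟩ := W.mkQ_surjective q
  -- `z - ev x₀` kills every functional vanishing on `W`, so it factors through restriction to `W`
  have hker : ker (lcomp R E W.subtype) ≤ ker (z - applyₗ x₀) := by
    intro f hf
    rw [mem_ker, lcomp_apply'] at hf
    have hfW : W ≤ ker f := fun w hw => by simpa using congrArg (· ⟨w, hw⟩) hf
    have := hq (W.liftQ f hfW)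
    rw [LinearMap.comp_apply, lcomp_apply', W.liftQ_mkQ] at this
    rw [mem_ker, LinearMap.sub_apply, this, mkQ_apply, W.liftQ_apply, applyₗ_apply_apply,
      sub_self]
  obtain ⟨z', hz'⟩ := exists_comp_eq_of_ker_le _ _ hker
  obtain ⟨w, hw⟩ := hW z'
  refine ⟨x₀ + w, fun f => ?_⟩
  have := congrArg (· f) hz'
  simp only [LinearMap.comp_apply, lcomp_apply', hw, LinearMap.sub_apply,
    applyₗ_apply_apply] at this
  rw [map_add, subtype_apply] at *
  rw [this, add_sub_cancel]

theorem bijective (hE : IsCogenerator R E) (hM : EvalSurjective R E M)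
    {ev : M → (M →ₗ[R] E) →ₗ[R] E} (hev : ∀ x f, ev x f = f x) : Function.Bijective ev := by
  refine ⟨fun x y hxy => by_contra fun hne => ?_, fun z => ?_⟩
  · obtain ⟨f, hf⟩ := hE M (x - y) (sub_ne_zero.2 hne)
    apply hf
    rw [map_sub, ← hev, ← hev, hxy, sub_self]
  · obtain ⟨x, hx⟩ := hM z
    exact ⟨x, LinearMap.ext fun f => (hev x f).trans (hx f).symm⟩

theorem mem_of_iInf_ker_le (hE : IsCogenerator R E) (hM : EvalSurjective R E M)
    (X : Submodule R (M →ₗ[R] E)) {g : M →ₗ[R] E} (hg : ⨅ f ∈ X, ker f ≤ ker g) : g ∈ X := by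
  by_contra hgX
  obtain ⟨ζ, hζ⟩ := hE _ (Submodule.Quotient.mk g : (M →ₗ[R] E) ⧸ X)
    ((Submodule.Quotient.mk_eq_zero _).not.2 hgX)
  obtain ⟨x, hx⟩ := hM (ζ ∘ₗ X.mkQ)
  have hxX : x ∈ ⨅ f ∈ X, ker f := by
    simp only [Submodule.mem_iInf, mem_ker]
    intro f hf
    rw [← hx, LinearMap.comp_apply, mkQ_apply, (Submodule.Quotient.mk_eq_zero _).2 hf, map_zero]
  apply hζ
  rw [← mkQ_apply, ← LinearMap.comp_apply, hx, mem_ker.1 (hg hxX)]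

theorem isArtinian_dual [IsNoetherian R M] (hE : IsCogenerator R E)
    (hM : EvalSurjective R E M) : IsArtinian R (M →ₗ[R] E) := by
  refine StrictAnti.wellFoundedLT (f := fun X : Submodule R (M →ₗ[R] E) => ⨅ f ∈ X, ker f) ?_
  refine fun X Y hXY => lt_of_le_of_ne (biInf_mono fun f hf => hXY.le hf) fun heq => ?_
  exact hXY.not_ge fun g hg => hM.mem_of_iInf_ker_le hE X (heq.symm.le.trans (biInf_le _ hg))

end EvalSurjective

theorem IsCogenerator.mem_of_forall_smul_eq_zero (hE : IsCogenerator R E) (I : Ideal R) {s : R}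
    (h : ∀ x : E, (∀ t ∈ I, t • x = 0) → s • x = 0) : s ∈ I := by
  by_contra hs
  obtain ⟨f, hf⟩ := hE _ (Submodule.Quotient.mk s : R ⧸ I) ((Quotient.mk_eq_zero I).not.2 hs)
  have hmk (t : R) : (Submodule.Quotient.mk t : R ⧸ I) = t • Submodule.Quotient.mk 1 := by
    rw [← Quotient.mk_smul, smul_eq_mul, mul_one]
  apply hf
  rw [hmk, map_smul]
  exact h _ fun t ht => by rw [← map_smul, ← hmk, (Quotient.mk_eq_zero I).2 ht, map_zero]

theorem EvalSurjective.exists_smul_eq_of_quotient {I : Ideal R} (h : EvalSurjective R E (R ⧸ I))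
    (φ : E →ₗ[R] E) : ∃ r : R, ∀ x : E, (∀ t ∈ I, t • x = 0) → φ x = r • x := by
  obtain ⟨c, hc⟩ := h (φ ∘ₗ applyₗ (Submodule.Quotient.mk 1))
  obtain ⟨r, rfl⟩ := Submodule.Quotient.mk_surjective _ c
  refine ⟨r, fun x hx => ?_⟩
  have hI : I ≤ ker (toSpanSingleton R E x) := fun t ht => by
    rw [mem_ker, toSpanSingleton_apply, hx t ht]
  have := hc (I.liftQ (toSpanSingleton R E x) hI)
  rwa [LinearMap.comp_apply, applyₗ_apply_apply, liftQ_apply, liftQ_apply, toSpanSingleton_apply,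
    toSpanSingleton_apply, one_smul] at this

end Reflexivity

section EndSurjective

variable {R : Type u} [CommRing R] {E : Type u} [AddCommGroup E] [Module R E]

theorem evalSurjective_ring (hEnd : Function.Surjective (algebraMap R (Module.End R E))) :
    EvalSurjective R E R := by
  -- instance search would find `homLeftModule` (via `Rᵐᵒᵖ` acting on `R`), which is not defeq
  -- to the `LinearMap.module` structure that `EvalSurjective` refers to
  let _ : Module R (R →ₗ[R] E) := LinearMap.module
  intro z
  obtain ⟨r, hr⟩ := hEnd (z ∘ₗ (ringLmapEquivSelf R R E).symm.toLinearMap)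
  refine ⟨r, fun f => ?_⟩
  have := congrArg (· (f 1)) hr
  simp only [Module.algebraMap_end_apply, LinearMap.comp_apply, LinearEquiv.coe_coe] at this
  calc z f = z ((ringLmapEquivSelf R R E).symm (f 1)) :=
        congrArg z ((ringLmapEquivSelf R R E).symm_apply_apply f).symm
    _ = f r := by rw [← this, ← map_smul, smul_eq_mul, mul_one]

theorem evalSurjective_self (hEnd : Function.Surjective (algebraMap R (Module.End R E))) :
    EvalSurjective R E E := by
  intro z
  refine ⟨z LinearMap.id, fun f => ?_⟩
  obtain ⟨r, rfl⟩ := hEnd f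
  rw [Module.algebraMap_end_eq_smul_id, map_smul, LinearMap.smul_apply, LinearMap.id_apply]

theorem finite_dual_of_injective_pi [Module.Injective R E]
    (hEnd : Function.Surjective (algebraMap R (Module.End R E))) {N : Type u} [AddCommGroup N]
    [Module R N] {ι : Type u} [Finite ι] (θ : N →ₗ[R] ι → E) (hθ : Function.Injective θ) :
    Module.Finite R (N →ₗ[R] E) := by
  classical
  have := Fintype.ofFinite ι
  refine Module.Finite.of_surjective (Fintype.linearCombination R fun i => proj i ∘ₗ θ) ?_
  intro g
  obtain ⟨ζ, rfl⟩ := exists_comp_eq_of_ker_le θ g (by rw [ker_eq_bot.2 hθ]; exact bot_le)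
  choose r hr using fun i => hEnd (ζ ∘ₗ single R (fun _ => E) i)
  refine ⟨r, LinearMap.ext fun x => ?_⟩
  rw [Fintype.linearCombination_apply, LinearMap.comp_apply, ← Finset.univ_sum_single (θ x),
    map_sum, LinearMap.sum_apply]
  refine Finset.sum_congr rfl fun i _ => ?_
  rw [← LinearMap.coe_single (R := R), ← LinearMap.comp_apply, ← hr i,
    Module.algebraMap_end_apply]
  rfl

theorem evalSurjective_of_finite [Module.Injective R E]
    (hEnd : Function.Surjective (algebraMap R (Module.End R E))) {M : Type u} [AddCommGroup M]
    [Module R M] [Module.Finite R M] : EvalSurjective R E M := by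
  obtain ⟨n, s, hs⟩ := Module.Finite.exists_fin (R := R) (M := M)
  refine .of_surjective (Fintype.linearCombination R s) ?_
    (.pi fun _ => evalSurjective_ring hEnd)
  rw [← range_eq_top, Fintype.range_linearCombination, hs]

end EndSurjective

namespace IsInjEnvelope

variable {R : Type u} [CommRing R] [IsLocalRing R] {E : Type u} [AddCommGroup E] [Module R E]
variable {e : ResidueField R →ₗ[R] E}

theorem _root_.IsLocalRing.ResidueField.smul_eq_zero {r : R} (hr : r ∈ maximalIdeal R)
    (y : ResidueField R) : r • y = 0 := by
  rw [Algebra.smul_def, ResidueField.algebraMap_eq, (residue_eq_zero_iff r).2 hr, zero_mul]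

theorem isCogenerator (he : IsInjEnvelope e) : IsCogenerator R E := by
  intro M _ _ x hx
  have := he.2.1
  have hann : ker (toSpanSingleton R M x) ≤ maximalIdeal R := le_maximalIdeal fun h => hx <| by
    simpa using (h ▸ mem_top : (1 : R) ∈ ker (toSpanSingleton R M x))
  obtain ⟨f, hf⟩ := exists_comp_eq_of_ker_le (toSpanSingleton R M x)
    (e ∘ₗ Algebra.linearMap R (ResidueField R)) fun r hr => by
      rw [mem_ker, LinearMap.comp_apply, Algebra.linearMap_apply, ResidueField.algebraMap_eq,
        (residue_eq_zero_iff r).2 (hann hr), map_zero]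
  have hfx : f x = e 1 := by simpa using congrArg (· 1) hf
  exact ⟨f, fun h => one_ne_zero (he.1 (by rw [map_zero, ← hfx, h]) : (1 : ResidueField R) = 0)⟩

theorem mem_range_of_forall_smul_eq_zero_s17 (he : IsInjEnvelope e) {x : E}
    (hx : ∀ r ∈ maximalIdeal R, r • x = 0) : x ∈ range e := by
  obtain rfl | hx0 := eq_or_ne x 0
  · exact zero_mem _
  have hmeet : (R ∙ x) ⊓ range e ≠ ⊥ := fun h => hx0 (by simpa using he.2.2 _ h)
  obtain ⟨_, ⟨hy, hye⟩, hy0⟩ := (Submodule.ne_bot_iff _).1 hmeet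
  obtain ⟨c, rfl⟩ := mem_span_singleton.1 hy
  obtain ⟨u, rfl⟩ : IsUnit c := of_not_not fun hc => hy0 (hx c ((mem_maximalIdeal c).2 hc))
  simpa using (range e).smul_mem (↑u⁻¹ : R) hye

theorem evalSurjective_residueField (he : IsInjEnvelope e) :
    EvalSurjective R E (ResidueField R) := by
  have hform (f : ResidueField R →ₗ[R] E) : ∃ r : R, f = r • e := by
    obtain ⟨c, hc⟩ := he.mem_range_of_forall_smul_eq_zero_s17 (x := f 1) fun r hr => by
      rw [← map_smul, ResidueField.smul_eq_zero hr 1, map_zero]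
    obtain ⟨r, rfl⟩ := residue_surjective c
    refine ⟨r, LinearMap.ext fun y => ?_⟩
    obtain ⟨s, rfl⟩ := residue_surjective y
    have hres (t : R) : residue R t = t • (1 : ResidueField R) := by
      rw [Algebra.smul_def, mul_one]; rfl
    rw [LinearMap.smul_apply, hres s, map_smul, map_smul, ← hc, hres r, map_smul, smul_comm]
  intro z
  have hze : ∀ r ∈ maximalIdeal R, r • z e = 0 := fun r hr => by
    rw [← map_smul, show r • e = 0 from LinearMap.ext fun y => by
      rw [LinearMap.smul_apply, ← map_smul, ResidueField.smul_eq_zero hr y,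
        map_zero, LinearMap.zero_apply], map_zero]
  obtain ⟨c, hc⟩ := he.mem_range_of_forall_smul_eq_zero_s17 hze
  refine ⟨c, fun f => ?_⟩
  obtain ⟨r, rfl⟩ := hform f
  rw [map_smul, LinearMap.smul_apply, hc]

theorem evalSurjective_of_maximalIdeal_le_annihilator (he : IsInjEnvelope e) {L : Type u}
    [AddCommGroup L] [Module R L] [Module.Finite R L]
    (hL : maximalIdeal R ≤ Module.annihilator R L) : EvalSurjective R E L := by
  have := he.2.1
  obtain ⟨n, w, hw⟩ := Module.Finite.exists_fin (R := R) (M := L)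
  have hker (i : Fin n) : maximalIdeal R ≤ ker (toSpanSingleton R L (w i)) := fun r hr => by
    rw [mem_ker, toSpanSingleton_apply, Module.mem_annihilator.1 (hL hr)]
  -- `ResidueField R` and `R ⧸ maximalIdeal R` carry defeq but syntactically different
  -- `R`-module structures
  have hk : EvalSurjective R E (R ⧸ maximalIdeal R) := .of_surjective
    (LinearMap.id : ResidueField R →ₗ[R] R ⧸ maximalIdeal R) (fun x => ⟨x, rfl⟩)
    he.evalSurjective_residueField
  let π : (Fin n → R ⧸ maximalIdeal R) →ₗ[R] L :=
    ∑ i, (maximalIdeal R).liftQ _ (hker i) ∘ₗ proj i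
  refine .of_surjective π ?_ (.pi fun _ => hk)
  rw [← range_eq_top, eq_top_iff, ← hw, span_le]
  rintro _ ⟨i, rfl⟩
  refine ⟨Pi.single i 1, ?_⟩
  simp only [π, LinearMap.coe_sum, Finset.sum_apply, LinearMap.comp_apply, proj_apply]
  rw [Finset.sum_eq_single i (fun j _ hj => by rw [Pi.single_eq_of_ne hj, map_zero])
    (by simp), Pi.single_eq_same]
  exact one_smul R (w i)

theorem evalSurjective_of_pow_le_annihilator [IsNoetherianRing R] (he : IsInjEnvelope e) (n : ℕ)
    (L : Type u) [AddCommGroup L] [Module R L] [Module.Finite R L]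
    (hL : maximalIdeal R ^ n ≤ Module.annihilator R L) : EvalSurjective R E L := by
  induction n generalizing L with
  | zero =>
    have : Subsingleton L := Module.annihilator_eq_top_iff.1 (top_le_iff.1 (by simpa using hL))
    exact .of_subsingleton
  | succ n ih =>
    have := he.2.1
    let W : Submodule R L := maximalIdeal R ^ n • ⊤
    refine .of_submodule_of_quotient W
      (he.evalSurjective_of_maximalIdeal_le_annihilator ?_) (ih _ ?_)
    · intro r hr
      rw [Module.mem_annihilator]
      rintro ⟨w, hw⟩
      have hmem : r • w ∈ maximalIdeal R ^ (n + 1) • (⊤ : Submodule R L) := by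
        rw [pow_succ', Submodule.mul_smul]
        exact smul_mem_smul hr hw
      refine Subtype.ext ((mem_bot R).1 (smul_le.2 (fun s hs x _ => ?_) hmem))
      rw [Module.mem_annihilator.1 (hL hs)]
      exact zero_mem ⊥
    · intro r hr
      rw [Module.mem_annihilator]
      rintro ⟨x⟩
      exact (Quotient.mk_eq_zero W).2 (smul_mem_smul hr mem_top)

theorem associatedPrimes_subset [IsNoetherianRing R] (he : IsInjEnvelope e) :
    associatedPrimes R E ⊆ {maximalIdeal R} := by
  intro P hP
  obtain ⟨hP, f, hf⟩ := (isAssociatedPrime_iff_exists_injective_linearMap P E).1 hP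
  have : Nontrivial (R ⧸ P) := Ideal.Quotient.nontrivial_iff.2 hP.ne_top
  have hmeet : range f ⊓ range e ≠ ⊥ := fun h => by
    have hf0 : f = 0 := range_eq_bot.1 (he.2.2 _ h)
    exact zero_ne_one
      (hf (by rw [hf0, LinearMap.zero_apply, LinearMap.zero_apply]) : (0 : R ⧸ P) = 1)
  obtain ⟨_, ⟨⟨a, rfl⟩, c, hc⟩, hfa⟩ := (Submodule.ne_bot_iff _).1 hmeet
  obtain ⟨a, rfl⟩ := Submodule.Quotient.mk_surjective P a
  refine ((maximalIdeal.isMaximal R).eq_of_le hP.ne_top fun r hr => ?_).symm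
  have hra : r • (Submodule.Quotient.mk a : R ⧸ P) = 0 := hf (by
    rw [map_smul, ← hc, ← map_smul, ResidueField.smul_eq_zero hr, map_zero, map_zero])
  rw [← Quotient.mk_smul, Quotient.mk_eq_zero, smul_eq_mul] at hra
  exact (hP.mem_or_mem hra).resolve_right fun ha => hfa (by
    rw [(Quotient.mk_eq_zero P).2 ha, map_zero])

theorem exists_pow_smul_eq_zero [IsNoetherianRing R] (he : IsInjEnvelope e) (x : E) :
    ∃ n : ℕ, ∀ r ∈ maximalIdeal R ^ n, r • x = 0 := by
  have hrad : maximalIdeal R ≤ (Module.annihilator R (R ∙ x)).radical := by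
    rw [← Ideal.sInf_minimalPrimes]
    refine le_sInf fun P hP => (he.associatedPrimes_subset ?_).ge
    exact associatedPrimes.subset_of_injective (injective_subtype _)
      (Module.associatedPrimes.minimalPrimes_annihilator_subset_associatedPrimes R _ hP)
  obtain ⟨n, hn⟩ := Ideal.exists_pow_le_of_le_radical_of_fg hrad (IsNoetherian.noetherian _)
  exact ⟨n, fun r hr => congrArg Subtype.val
    (Module.mem_annihilator.1 (hn hr) ⟨x, mem_span_singleton_self x⟩)⟩

theorem algebraMap_end_surjective [IsNoetherianRing R] (he : IsInjEnvelope e)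
    (hR : IsAdicComplete (maximalIdeal R) R) :
    Function.Surjective (algebraMap R (Module.End R E)) := by
  intro φ
  choose r hr using fun n =>
    (he.evalSurjective_of_pow_le_annihilator n (R ⧸ maximalIdeal R ^ n)
      Ideal.annihilator_quotient.ge).exists_smul_eq_of_quotient φ
  have hcauchy {p q : ℕ} (hpq : p ≤ q) :
      r p ≡ r q [SMOD (maximalIdeal R ^ p • ⊤ : Submodule R R)] := by
    rw [SModEq.sub_mem, smul_eq_mul, Ideal.mul_top]
    refine he.isCogenerator.mem_of_forall_smul_eq_zero _ fun x hx => ?_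
    have hx' : ∀ t ∈ maximalIdeal R ^ q, t • x = 0 := fun t ht =>
      hx t (Ideal.pow_le_pow_right hpq ht)
    rw [sub_smul, ← hr p x hx, ← hr q x hx', sub_self]
  obtain ⟨L, hL⟩ := hR.toIsPrecomplete.prec' r hcauchy
  refine ⟨L, LinearMap.ext fun x => ?_⟩
  obtain ⟨n, hn⟩ := he.exists_pow_smul_eq_zero x
  have hLn := hL n
  rw [SModEq.sub_mem, smul_eq_mul, Ideal.mul_top] at hLn
  rw [Module.algebraMap_end_apply, hr n x hn, ← sub_eq_zero, ← sub_smul]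
  exact hn _ (by simpa using neg_mem hLn)

end IsInjEnvelope

section NoetherAlgebra

variable {R : Type u} [CommRing R] {E : Type u} [AddCommGroup E] [Module R E]
variable {N : Type u} [AddCommGroup N] [Module R N]

theorem exists_finset_forall_apply_smul_eq_zero (A : Type u) [Ring A] [Module A N] [IsArtinian A N]
    (hE : IsCogenerator R E) :
    ∃ F : Finset (N →ₗ[R] E), ∀ x : N, (∀ g ∈ F, ∀ a : A, g (a • x) = 0) → x = 0 := by
  classical
  let K (F : Finset (N →ₗ[R] E)) : Submodule A N :=
    { carrier := {x | ∀ g ∈ F, ∀ a : A, g (a • x) = 0}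
      add_mem' := fun hx hy g hg a => by rw [smul_add, map_add, hx g hg a, hy g hg a, add_zero]
      zero_mem' := fun g _ a => by rw [smul_zero, map_zero]
      smul_mem' := fun b x hx g hg a => by rw [← mul_smul]; exact hx g hg (a * b) }
  obtain ⟨_, ⟨F, rfl⟩, hmin⟩ := IsArtinian.set_has_minimal (Set.range K) ⟨K ∅, ∅, rfl⟩
  refine ⟨F, fun x hx => by_contra fun hx0 => ?_⟩
  obtain ⟨g, hg⟩ := hE N x hx0
  have hle : K (insert g F) ≤ K F := fun y hy g' hg' => hy g' (Finset.mem_insert_of_mem hg')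
  refine hmin _ ⟨insert g F, rfl⟩ (hle.lt_of_ne fun heq => hg ?_)
  have hx' : x ∈ K (insert g F) := heq ▸ hx
  simpa using hx' g (Finset.mem_insert_self g F) 1

theorem exists_injective_pi_of_isArtinian {A : Type u} [Ring A] [Algebra R A]
    [Module.Finite R A] [Module A N] [IsScalarTower R A N] [IsArtinian A N]
    (hE : IsCogenerator R E) :
    ∃ (ι : Type u) (_ : Finite ι) (θ : N →ₗ[R] ι → E), Function.Injective θ := by
  obtain ⟨F, hF⟩ := exists_finset_forall_apply_smul_eq_zero (N := N) A hE
  obtain ⟨n, a, ha⟩ := Module.Finite.exists_fin (R := R) (M := A)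
  refine ⟨F × Fin n, inferInstance,
    LinearMap.pi fun p => MulOpposite.op (a p.2) • (p.1 : N →ₗ[R] E), ?_⟩
  refine (injective_iff_map_eq_zero _).2 fun x hx => hF x fun g hg b => ?_
  have : g ∘ₗ (toSpanSingleton A N x).restrictScalars R = 0 :=
    LinearMap.ext_on_range ha fun j => by
      simpa [homRight_smul_apply] using congrFun hx ⟨⟨g, hg⟩, j⟩
  simpa using congrArg (· b) this

end NoetherAlgebra

/-- Let `(R, m, k)` be a commutative noetherian local ring that is
`m`-adically complete and `A` a Noether `R`-algebra. Then `Hom_R(-, E_R(k))` sends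
finitely generated right `A`-modules to artinian left `A`-modules and artinian left
`A`-modules to finitely generated right `A`-modules, and the canonical evaluation
maps `M → Hom_R(Hom_R(M, E_R(k)), E_R(k))` are isomorphisms on both categories
(Matlis duality). -/
theorem matlis_duality_over_complete_local_ring
    {R A : Type u} [CommRing R] [IsNoetherianRing R] [IsLocalRing R]
    [Ring A] [Algebra R A] [Module.Finite R A]
    (hR : IsAdicComplete (IsLocalRing.maximalIdeal R) R)
    (E : Type u) [AddCommGroup E] [Module R E]
    (e : IsLocalRing.ResidueField R →ₗ[R] E) (he : IsInjEnvelope e) :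
    (∀ (M : Type u) [AddCommGroup M] [Module R M] [Module Aᵐᵒᵖ M]
      [IsScalarTower R Aᵐᵒᵖ M], Module.Finite Aᵐᵒᵖ M →
        IsArtinian A (M →ₗ[R] E) ∧ Function.Bijective (evalRight R A M E)) ∧
    (∀ (N : Type u) [AddCommGroup N] [Module R N] [Module A N]
      [IsScalarTower R A N], IsArtinian A N →
        Module.Finite Aᵐᵒᵖ (N →ₗ[R] E) ∧ Function.Bijective (evalLeft R A N E)) := by
  have := he.2.1
  have hE := he.isCogenerator
  have hEnd := he.algebraMap_end_surjective hR
  have : Module.Finite R Aᵐᵒᵖ := .equiv (MulOpposite.opLinearEquiv R)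
  refine ⟨fun M _ _ _ _ hM => ?_, fun N _ _ _ _ hN => ?_⟩
  · have : Module.Finite R M := .trans Aᵐᵒᵖ M
    have hrefl : EvalSurjective R E M := evalSurjective_of_finite hEnd
    exact ⟨isArtinian_of_tower R (hrefl.isArtinian_dual hE), hrefl.bijective hE fun _ _ => rfl⟩
  · obtain ⟨ι, _, θ, hθ⟩ := exists_injective_pi_of_isArtinian (A := A) (N := N) hE
    have : Module.Finite R (N →ₗ[R] E) := finite_dual_of_injective_pi hEnd θ hθ
    have hrefl : EvalSurjective R E N :=
      (EvalSurjective.pi fun _ => evalSurjective_self hEnd).of_injective hE θ hθ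
    exact ⟨.of_restrictScalars_finite R _ _, hrefl.bijective hE fun _ _ => rfl⟩
end

section
/- Let A be a Noether R-algebra. The assignment P ↦ S_A(P) is a bijection from the set Max A of maximal two-sided ideals of A onto the set of isomorphism classes of simple right A-modules, and its inverse sends a simple right A-module S to its annihilator Ann_A(S). -/
/-!
Common definitions: module-theoretic notions over a (possibly noncommutative) ring,
notions relative to a central base ring, and Hom-module structures.
Right `A`-modules are treated as left `Aᵐᵒᵖ`-modules.
-/

universe u

open MulOpposite

/-!
Let `S` be a simple right `A`-module and `y ∈ S` nonzero. Since `A` is spanned by finitely many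
`g₁, …, gₙ` over the central image of `R`, an element of `A` kills `S = y • A` as soon as it
kills the `y • gᵢ`; hence `A ⧸ Ann(S)` embeds in `Sⁿ` and is a semisimple, `S`-isotypic right
module. Its endomorphisms are left multiplications, so a two-sided ideal `Q ⊋ Ann(S)` has
nonzero, fully invariant image in it, hence is everything: `Q = A`. A simple `S'` with the same
annihilator is a quotient of `A ⧸ Ann(S)`, hence isomorphic to `S`. Conversely, a maximal
two-sided ideal `P` lies in a maximal right ideal `m`, and `Ann(A ⧸ m)` is a proper two-sided
ideal containing `P`.
-/

theorem isIsotypicOfType_pi {R S : Type*} [Ring R] [AddCommGroup S] [Module R S]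
    [IsSimpleModule R S] (ι : Type*) : IsIsotypicOfType R (ι → S) S := by
  intro m _
  have := IsSimpleModule.nontrivial R m
  obtain ⟨u, hu⟩ := exists_ne (0 : m)
  obtain ⟨i, hi⟩ : ∃ i, (u : ι → S) i ≠ 0 := by
    by_contra! h
    exact hu (Subtype.ext (funext h))
  have hproj : (LinearMap.proj i).comp m.subtype ≠ 0 := fun h => hi (LinearMap.congr_fun h u)
  exact ⟨.ofBijective _ (LinearMap.bijective_of_ne_zero hproj)⟩

theorem IsIsotypicOfType.nonempty_linearEquiv_of_surjective {R M N S : Type*} [Ring R]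
    [AddCommGroup M] [Module R M] [AddCommGroup N] [Module R N] [AddCommGroup S] [Module R S]
    [IsSemisimpleModule R M] [IsSimpleModule R N] (h : IsIsotypicOfType R M S)
    {f : M →ₗ[R] N} (hf : Function.Surjective f) : Nonempty (N ≃ₗ[R] S) := by
  obtain ⟨m, ⟨e⟩⟩ := IsSemisimpleModule.exists_submodule_linearEquiv_quotient (LinearMap.ker f)
  let e' : m ≃ₗ[R] N := e.trans (f.quotKerEquivOfSurjective hf)
  have := IsSimpleModule.congr e'
  exact ⟨e'.symm.trans (h m).some⟩

section RightAnnihilator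

open LinearMap

variable {A : Type*} [Ring A]

def Ideal.toRight (P : Ideal A) (hP : ∀ a ∈ P, ∀ b : A, a * b ∈ P) :
    Submodule Aᵐᵒᵖ A where
  carrier := P
  add_mem' := P.add_mem
  zero_mem' := P.zero_mem
  smul_mem' c a ha := hP a ha c.unop

theorem Ideal.mem_toRight {P : Ideal A} {hP : ∀ a ∈ P, ∀ b : A, a * b ∈ P} {a : A} :
    a ∈ P.toRight hP ↔ a ∈ P := Iff.rfl

theorem Ideal.toRight_eq_top_iff {P : Ideal A} {hP : ∀ a ∈ P, ∀ b : A, a * b ∈ P} :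
    P.toRight hP = ⊤ ↔ P = ⊤ := by
  refine ⟨fun h => (Ideal.eq_top_iff_one P).mpr ?_, fun h => ?_⟩
  · exact Ideal.mem_toRight.mp (h ▸ Submodule.mem_top)
  · ext a
    simp [Ideal.mem_toRight, h]

variable {M N : Type*} [AddCommGroup M] [Module Aᵐᵒᵖ M] [AddCommGroup N] [Module Aᵐᵒᵖ N]

variable (A M) in
def rightAnn : Ideal A where
  carrier := {a | ∀ x : M, op a • x = 0}
  add_mem' ha hb x := by rw [op_add, add_smul, ha x, hb x, add_zero]
  zero_mem' x := by rw [op_zero, zero_smul]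
  smul_mem' c a ha x := by rw [smul_eq_mul, op_mul, mul_smul, ha]

theorem rightAnn_mul_mem : ∀ a ∈ rightAnn A M, ∀ b : A, a * b ∈ rightAnn A M :=
  fun a ha b x => by rw [op_mul, mul_smul, ha, smul_zero]

theorem rightAnn_ne_top [Nontrivial M] : rightAnn A M ≠ (⊤ : Ideal A) := fun h => by
  obtain ⟨x, hx⟩ := exists_ne (0 : M)
  exact hx (by simpa using (h ▸ Submodule.mem_top : (1 : A) ∈ rightAnn A M) x)

variable (A M) in
abbrev rightAnnSubmodule : Submodule Aᵐᵒᵖ A := (rightAnn A M).toRight rightAnn_mul_mem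

variable (A) in
def toSpanSingletonRight (y : M) : A →ₗ[Aᵐᵒᵖ] M where
  toFun a := op a • y
  map_add' a b := by rw [op_add, add_smul]
  map_smul' c a := by
    rw [RingHom.id_apply, ← mul_smul]
    rfl

@[simp]
theorem toSpanSingletonRight_apply (y : M) (a : A) : toSpanSingletonRight A y a = op a • y := rfl

theorem toSpanSingletonRight_surjective [IsSimpleModule Aᵐᵒᵖ M] {y : M} (hy : y ≠ 0) :
    Function.Surjective (toSpanSingletonRight A y) := by
  rw [← range_eq_top]
  refine (eq_bot_or_eq_top _).resolve_left fun h => hy ?_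
  simpa [h] using (mem_range_self (toSpanSingletonRight A y) 1)

theorem op_smul_algebraMap_smul_comm {R : Type*} [CommRing R] [Algebra R A] (a : A) (r : R)
    (x : M) : op a • op (algebraMap R A r) • x = op (algebraMap R A r) • op a • x := by
  rw [← mul_smul, ← mul_smul, ← op_mul, ← op_mul, Algebra.commutes]

theorem exists_ker_pi_eq_rightAnnSubmodule (R : Type*) [CommRing R] [Algebra R A]
    [Module.Finite R A] {y : M} (hy : Function.Surjective (toSpanSingletonRight A y)) :
    ∃ (n : ℕ) (x : Fin n → M),
      ker (pi fun i => toSpanSingletonRight A (x i)) = rightAnnSubmodule A M := by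
  obtain ⟨n, g, hg⟩ := Module.Finite.exists_fin (R := R) (M := A)
  refine ⟨n, fun i => op (g i) • y, le_antisymm (fun a ha => ?_) fun a ha => ?_⟩
  · have hgen : ∀ i, op a • op (g i) • y = 0 := fun i => congrFun (mem_ker.mp ha) i
    intro x
    obtain ⟨b, rfl⟩ := hy x
    have hb : b ∈ Submodule.span R (Set.range g) := hg ▸ Submodule.mem_top
    induction hb using Submodule.span_induction with
    | mem _ h =>
      obtain ⟨i, rfl⟩ := h
      exact hgen i
    | zero => rw [map_zero, smul_zero]
    | add b c _ _ hb hc => rw [map_add, smul_add, hb, hc, add_zero]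
    | smul r b _ hb =>
      rw [toSpanSingletonRight_apply] at hb ⊢
      rw [Algebra.smul_def, Algebra.commutes, op_mul, mul_smul, op_smul_algebraMap_smul_comm, hb,
        smul_zero]
  · exact mem_ker.mpr (funext fun i => ha _)

instance : Module.Finite Aᵐᵒᵖ A :=
  .of_surjective (toSpanSingleton Aᵐᵒᵖ A 1) fun a => ⟨op a, by simp⟩

theorem isFullyInvariant_map_mkQ (I : Submodule Aᵐᵒᵖ A) {J : Submodule Aᵐᵒᵖ A}
    (hJ : ∀ c a : A, a ∈ J → c * a ∈ J) : (J.map I.mkQ).IsFullyInvariant := by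
  intro f x hx
  obtain ⟨a, ha, rfl⟩ := Submodule.mem_map.mp hx
  obtain ⟨c, hc⟩ := I.mkQ_surjective (f (I.mkQ 1))
  have hf : f (I.mkQ a) = I.mkQ (c * a) := by
    calc f (I.mkQ a) = f (op a • I.mkQ 1) := by rw [← map_smul, op_smul_eq_mul, one_mul]
      _ = op a • I.mkQ c := by rw [map_smul, hc]
      _ = I.mkQ (c * a) := by rw [← map_smul, op_smul_eq_mul]
  exact Submodule.mem_comap.mpr (hf ▸ Submodule.mem_map_of_mem (hJ c a ha))

theorem le_rightAnn_quotient {P : Ideal A} {hP : ∀ a ∈ P, ∀ b : A, a * b ∈ P}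
    {m : Submodule Aᵐᵒᵖ A} (hPm : P.toRight hP ≤ m) : P ≤ rightAnn A (A ⧸ m) := by
  intro a ha x
  induction x using Submodule.Quotient.induction_on with
  | H b =>
    rw [← Submodule.Quotient.mk_smul, Submodule.Quotient.mk_eq_zero, op_smul_eq_mul]
    exact hPm (P.mul_mem_left b ha)

theorem exists_isSimpleModule_quotient_rightAnn_eq {P : Ideal A} (hP : IsMaximalTwoSided P) :
    ∃ m : Submodule Aᵐᵒᵖ A, IsSimpleModule Aᵐᵒᵖ (A ⧸ m) ∧ rightAnn A (A ⧸ m) = P := by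
  obtain ⟨hPr, hPne, hPmax⟩ := hP
  obtain ⟨m, hm, hPm⟩ := (eq_top_or_exists_le_coatom (P.toRight hPr)).resolve_left
    (mt Ideal.toRight_eq_top_iff.mp hPne)
  have hsimple := isSimpleModule_iff_isCoatom.mpr hm
  have := IsSimpleModule.nontrivial Aᵐᵒᵖ (A ⧸ m)
  refine ⟨m, hsimple, (eq_of_le_of_not_lt (le_rightAnn_quotient hPm) fun hlt => ?_).symm⟩
  exact rightAnn_ne_top (hPmax _ rightAnn_mul_mem hlt)

section Finite

variable (R : Type*) [CommRing R] [Algebra R A] [Module.Finite R A] [IsSimpleModule Aᵐᵒᵖ M]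

include R in
theorem exists_injective_quotient_rightAnnSubmodule :
    ∃ (n : ℕ) (f : (A ⧸ rightAnnSubmodule A M) →ₗ[Aᵐᵒᵖ] (Fin n → M)),
      Function.Injective f := by
  have := IsSimpleModule.nontrivial Aᵐᵒᵖ M
  obtain ⟨y, hy⟩ := exists_ne (0 : M)
  obtain ⟨n, x, hx⟩ :=
    exists_ker_pi_eq_rightAnnSubmodule R (toSpanSingletonRight_surjective (A := A) hy)
  exact ⟨n, (rightAnnSubmodule A M).liftQ _ hx.ge, by
    rw [← ker_eq_bot, Submodule.ker_liftQ_eq_bot']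
    exact hx.symm⟩

include R in
theorem isSemisimpleModule_quotient_rightAnnSubmodule :
    IsSemisimpleModule Aᵐᵒᵖ (A ⧸ rightAnnSubmodule A M) :=
  have ⟨_, _, hf⟩ := exists_injective_quotient_rightAnnSubmodule R
  .of_injective _ hf

include R in
theorem isIsotypicOfType_quotient_rightAnnSubmodule :
    IsIsotypicOfType Aᵐᵒᵖ (A ⧸ rightAnnSubmodule A M) M :=
  have ⟨_, _, hf⟩ := exists_injective_quotient_rightAnnSubmodule R
  (isIsotypicOfType_pi _).of_injective _ hf

include R in
theorem isMaximalTwoSided_rightAnn : IsMaximalTwoSided (rightAnn A M) := by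
  have := IsSimpleModule.nontrivial Aᵐᵒᵖ M
  have := isSemisimpleModule_quotient_rightAnnSubmodule (A := A) (M := M) R
  refine ⟨rightAnn_mul_mem, rightAnn_ne_top, fun Q hQ hlt => ?_⟩
  have hinv := isFullyInvariant_map_mkQ (rightAnnSubmodule A M) (J := Q.toRight hQ)
    fun c a ha => Q.mul_mem_left c ha
  rcases isIsotypic_iff_isFullyInvariant_imp_bot_or_top.mp
    (isIsotypicOfType_quotient_rightAnnSubmodule R).isIsotypic _ hinv with hbot | htop
  · have hQle : Q.toRight hQ ≤ rightAnnSubmodule A M := by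
      rwa [← Submodule.ker_mkQ (rightAnnSubmodule A M), le_ker_iff_map]
    exact absurd hQle hlt.not_ge
  · have hle : rightAnnSubmodule A M ≤ Q.toRight hQ := hlt.le
    rw [Submodule.map_mkQ_eq_top, sup_eq_right.mpr hle] at htop
    exact Ideal.toRight_eq_top_iff.mp htop

include R in
theorem nonempty_linearEquiv_of_rightAnn_eq [IsSimpleModule Aᵐᵒᵖ N]
    (h : rightAnn A M = rightAnn A N) : Nonempty (M ≃ₗ[Aᵐᵒᵖ] N) := by
  have := isSemisimpleModule_quotient_rightAnnSubmodule (A := A) (M := M) R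
  have := IsSimpleModule.nontrivial Aᵐᵒᵖ N
  obtain ⟨y, hy⟩ := exists_ne (0 : N)
  have hker : rightAnnSubmodule A M ≤ ker (toSpanSingletonRight A y) := fun a ha =>
    mem_ker.mpr ((h ▸ ha : a ∈ rightAnn A N) y)
  have hsurj : Function.Surjective ((rightAnnSubmodule A M).liftQ _ hker) :=
    .of_comp (g := (rightAnnSubmodule A M).mkQ) <| by
      rw [← coe_comp, Submodule.liftQ_mkQ]
      exact toSpanSingletonRight_surjective hy
  obtain ⟨e⟩ :=
    (isIsotypicOfType_quotient_rightAnnSubmodule R).nonempty_linearEquiv_of_surjective hsurj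
  exact ⟨e.symm⟩

end Finite

end RightAnnihilator

theorem simple_right_modules_biject_with_maximal_two_sided_ideals_general
    {R A : Type u} [CommRing R] [Ring A] [Algebra R A]
    [Module.Finite R A] :
    (∀ P : Ideal A, IsMaximalTwoSided P →
      ∃ S : ModuleOver Aᵐᵒᵖ, IsSimpleModule Aᵐᵒᵖ S.carrier ∧
        {a : A | ∀ x : S.carrier, op a • x = 0} = (P : Set A)) ∧
    (∀ (S : Type u) [AddCommGroup S] [Module Aᵐᵒᵖ S], IsSimpleModule Aᵐᵒᵖ S →
      ∃ P : Ideal A, IsMaximalTwoSided P ∧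
        {a : A | ∀ x : S, op a • x = 0} = (P : Set A)) ∧
    (∀ (S S' : Type u) [AddCommGroup S] [Module Aᵐᵒᵖ S] [AddCommGroup S']
      [Module Aᵐᵒᵖ S'],
      IsSimpleModule Aᵐᵒᵖ S → IsSimpleModule Aᵐᵒᵖ S' →
      {a : A | ∀ x : S, op a • x = 0} = {a : A | ∀ x : S', op a • x = 0} →
      Nonempty (S ≃ₗ[Aᵐᵒᵖ] S')) := by
  refine ⟨fun P hP => ?_, fun S _ _ _ => ⟨rightAnn A S, isMaximalTwoSided_rightAnn R, rfl⟩,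
    fun S S' _ _ _ _ _ _ h => nonempty_linearEquiv_of_rightAnn_eq R (SetLike.coe_injective h)⟩
  obtain ⟨m, hm, hann⟩ := exists_isSimpleModule_quotient_rightAnn_eq hP
  exact ⟨⟨A ⧸ m⟩, hm, congrArg SetLike.coe hann⟩

/-- For a Noether `R`-algebra `A`, the assignment `P ↦ S_A(P)` is a
bijection from the maximal two-sided ideals of `A` to the isomorphism classes of
simple right `A`-modules, with inverse `S ↦ Ann_A(S)`: every maximal two-sided ideal
is the annihilator of a simple right module, the annihilator of any simple right
module is a maximal two-sided ideal, and two simple right modules with the same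
annihilator are isomorphic. -/
theorem simple_right_modules_biject_with_maximal_two_sided_ideals
    {R A : Type u} [CommRing R] [IsNoetherianRing R] [Ring A] [Algebra R A]
    [Module.Finite R A] :
    (∀ P : Ideal A, IsMaximalTwoSided P →
      ∃ S : ModuleOver Aᵐᵒᵖ, IsSimpleModule Aᵐᵒᵖ S.carrier ∧
        {a : A | ∀ x : S.carrier, op a • x = 0} = (P : Set A)) ∧
    (∀ (S : Type u) [AddCommGroup S] [Module Aᵐᵒᵖ S], IsSimpleModule Aᵐᵒᵖ S →
      ∃ P : Ideal A, IsMaximalTwoSided P ∧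
        {a : A | ∀ x : S, op a • x = 0} = (P : Set A)) ∧
    (∀ (S S' : Type u) [AddCommGroup S] [Module Aᵐᵒᵖ S] [AddCommGroup S']
      [Module Aᵐᵒᵖ S'],
      IsSimpleModule Aᵐᵒᵖ S → IsSimpleModule Aᵐᵒᵖ S' →
      {a : A | ∀ x : S, op a • x = 0} = {a : A | ∀ x : S', op a • x = 0} →
      Nonempty (S ≃ₗ[Aᵐᵒᵖ] S')) :=
  simple_right_modules_biject_with_maximal_two_sided_ideals_general (R := R)
end
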